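/- arXiv:2605.05545 — 6 statements merged into one kernel-verified Lean document; each statement's English description precedes it below -/
import Mathlib

section
/- Let n, d be positive integers and let A be a symmetric real (dn)×(dn) matrix, partitioned into n² blocks A_{ij} ∈ ℝ^{d×d} for i, j ∈ {1,…,n}. If for every i ∈ {1,…,n} the diagonal block A_{ii} is symmetric positive semidefinite and its minimum eigenvalue satisfies λ_min(A_{ii}) ≥ Σ_{j≠i} ‖A_{ij}‖₂, then A is positive semidefinite. -/
open Matrix
open scoped Matrix.Norms.L2Operator

/-- The spectral norm (matrix 2-norm) of a real matrix: the operator norm of the induced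
linear map between Euclidean spaces. -/
noncomputable def specNorm {m n : ℕ} (A : Matrix (Fin m) (Fin n) ℝ) : ℝ :=
  ‖LinearMap.toContinuousLinearMap (Matrix.toEuclideanLin A)‖

/-- The minimum eigenvalue of a Hermitian (symmetric real) matrix. -/
noncomputable def lambdaMin {n : ℕ} {A : Matrix (Fin n) (Fin n) ℝ} (hA : A.IsHermitian) : ℝ :=
  ⨅ i, hA.eigenvalues i

lemma specNorm_eq {m n : ℕ} (A : Matrix (Fin m) (Fin n) ℝ) : specNorm A = ‖A‖ := rfl

lemma specNorm_nonneg {m n : ℕ} (A : Matrix (Fin m) (Fin n) ℝ) : 0 ≤ specNorm A :=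
  norm_nonneg _

lemma specNorm_transpose {m n : ℕ} (A : Matrix (Fin m) (Fin n) ℝ) :
    specNorm Aᵀ = specNorm A := by
  have h : Aᴴ = Aᵀ := by ext i j; simp
  rw [specNorm_eq, specNorm_eq, ← Matrix.l2_opNorm_conjTranspose A, h]

lemma dot_bound {d : ℕ} (M : Matrix (Fin d) (Fin d) ℝ) (u v : Fin d → ℝ) :
    |u ⬝ᵥ M *ᵥ v| ≤ specNorm M * ‖(WithLp.equiv 2 (Fin d → ℝ)).symm u‖ *
      ‖(WithLp.equiv 2 (Fin d → ℝ)).symm v‖ := by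
  set u' : EuclideanSpace ℝ (Fin d) := (WithLp.equiv 2 (Fin d → ℝ)).symm u
  set v' : EuclideanSpace ℝ (Fin d) := (WithLp.equiv 2 (Fin d → ℝ)).symm v
  have h1 : u ⬝ᵥ M *ᵥ v = inner (𝕜 := ℝ) u' ((WithLp.equiv 2 (Fin d → ℝ)).symm (M *ᵥ v)) := by
    simp [PiLp.inner_apply, dotProduct, u', RCLike.inner_apply, mul_comm]
  rw [h1]
  calc |inner (𝕜 := ℝ) u' ((WithLp.equiv 2 (Fin d → ℝ)).symm (M *ᵥ v))|
      ≤ ‖u'‖ * ‖(WithLp.equiv 2 (Fin d → ℝ)).symm (M *ᵥ v)‖ := abs_real_inner_le_norm _ _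
    _ ≤ ‖u'‖ * (‖M‖ * ‖v'‖) := by
        refine mul_le_mul_of_nonneg_left ?_ (norm_nonneg _)
        exact M.l2_opNorm_mulVec v'
    _ = specNorm M * ‖u'‖ * ‖v'‖ := by rw [specNorm_eq]; ring


lemma lambdaMin_le {d : ℕ} {M : Matrix (Fin d) (Fin d) ℝ} (hM : M.IsHermitian) (i : Fin d) :
    lambdaMin hM ≤ hM.eigenvalues i :=
  ciInf_le (Set.Finite.bddBelow (Set.finite_range _)) i

lemma quad_lower {d : ℕ} {M : Matrix (Fin d) (Fin d) ℝ} (hM : M.IsHermitian)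
    (v : Fin d → ℝ) (hd : 0 < d) :
    lambdaMin hM * ‖(WithLp.equiv 2 (Fin d → ℝ)).symm v‖ ^ 2 ≤ v ⬝ᵥ M *ᵥ v := by
  haveI : Nonempty (Fin d) := ⟨⟨0, hd⟩⟩
  set v' : EuclideanSpace ℝ (Fin d) := (WithLp.equiv 2 (Fin d → ℝ)).symm v with hv'
  set b := hM.eigenvectorBasis with hb
  set T := Matrix.toEuclideanLin M with hT
  have hsym : T.IsSymmetric := Matrix.isHermitian_iff_isSymmetric.mp hM
  have hTb : ∀ i, T (b i) = hM.eigenvalues i • b i := by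
    intro i
    rw [hT, Matrix.toEuclideanLin_apply]
    rw [show (b i).ofLp = ⇑(b i) from rfl,
      hM.mulVec_eigenvectorBasis i]
    rfl
  have key : inner (𝕜 := ℝ) v' (T v') =
      ∑ i, hM.eigenvalues i * (inner (𝕜 := ℝ) (b i) v') ^ 2 := by
    rw [← OrthonormalBasis.sum_inner_mul_inner b v' (T v')]
    refine Finset.sum_congr rfl fun i _ => ?_
    rw [← hsym (b i) v', hTb i, real_inner_smul_left, real_inner_comm v' (b i)]
    ring
  have parseval : ‖v'‖ ^ 2 = ∑ i, (inner (𝕜 := ℝ) (b i) v') ^ 2 := by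
    rw [← real_inner_self_eq_norm_sq, ← OrthonormalBasis.sum_inner_mul_inner b v' v']
    refine Finset.sum_congr rfl fun i _ => ?_
    rw [real_inner_comm v' (b i)]; ring
  have hquad : v ⬝ᵥ M *ᵥ v = inner (𝕜 := ℝ) v' (T v') := by
    rw [hT, Matrix.toEuclideanLin_apply]
    simp [PiLp.inner_apply, RCLike.inner_apply, dotProduct, hv', mul_comm]
  rw [hquad, key, parseval, Finset.mul_sum]
  exact Finset.sum_le_sum fun i _ =>
    mul_le_mul_of_nonneg_right (lambdaMin_le hM i) (sq_nonneg _)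


/-- block Gershgorin criterion for positive semidefiniteness.
`A` is a symmetric `(d*n) × (d*n)` real matrix, viewed as an `n × n` array of `d × d`
blocks `A_{ij} = (A (i,·) (j,·))`.  If every diagonal block is positive semidefinite and its
minimum eigenvalue dominates the sum of the spectral norms of the off-diagonal blocks in its
block row, then `A` is positive semidefinite. -/
theorem block_gershgorin_posSemidef
    (n d : ℕ) (hn : 0 < n) (hd : 0 < d)
    (A : Matrix (Fin n × Fin d) (Fin n × Fin d) ℝ)
    (hsymm : A.IsSymm)
    (hdiag : ∀ i : Fin n, (Matrix.of fun k l : Fin d => A (i, k) (i, l)).PosSemidef)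
    (hmin : ∀ i : Fin n,
      ∑ j ∈ Finset.univ.erase i, specNorm (Matrix.of fun k l : Fin d => A (i, k) (j, l)) ≤
        lambdaMin (hdiag i).1) :
    A.PosSemidef := by
  classical
  rw [Matrix.posSemidef_iff_dotProduct_mulVec]
  constructor
  · show Aᴴ = A
    have h : Aᴴ = Aᵀ := by ext i j; simp
    rw [h]; exact hsymm
  · intro x
    rw [star_trivial]
    set y : Fin n → Fin d → ℝ := fun i k => x (i, k) with hy
    set B : Fin n → Fin n → Matrix (Fin d) (Fin d) ℝ :=
      fun i j => Matrix.of fun k l => A (i, k) (j, l) with hB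
    set s : Fin n → Fin n → ℝ := fun i j => specNorm (B i j) with hs
    set N : Fin n → ℝ := fun i => ‖(WithLp.equiv 2 (Fin d → ℝ)).symm (y i)‖ with hN
    have hN0 : ∀ i, 0 ≤ N i := fun i => norm_nonneg _
    have hs0 : ∀ i j, 0 ≤ s i j := fun i j => specNorm_nonneg _
    have hssym : ∀ i j, s i j = s j i := by
      intro i j
      have hBt : B j i = (B i j)ᵀ := by
        ext k l
        simpa [hB] using (congrFun (congrFun hsymm (j, k)) (i, l)).symm
      rw [hs]
      show specNorm (B i j) = specNorm (B j i)
      rw [hBt, specNorm_transpose]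
    have expand : x ⬝ᵥ A *ᵥ x = ∑ i, ∑ j, y i ⬝ᵥ (B i j) *ᵥ (y j) := by
      simp only [dotProduct, Matrix.mulVec, Fintype.sum_prod_type, Matrix.of_apply,
        hy, hB, Finset.mul_sum]
      exact Finset.sum_congr rfl fun i _ => Finset.sum_comm
    have hdiagbound : ∀ i,
        (∑ j ∈ Finset.univ.erase i, s i j) * N i ^ 2 ≤ y i ⬝ᵥ (B i i) *ᵥ (y i) := by
      intro i
      calc (∑ j ∈ Finset.univ.erase i, s i j) * N i ^ 2
          ≤ lambdaMin (hdiag i).1 * N i ^ 2 :=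
            mul_le_mul_of_nonneg_right (hmin i) (sq_nonneg _)
        _ ≤ _ := quad_lower (hdiag i).1 (y i) hd
    have hoff : ∀ i j, -(s i j * N i * N j) ≤ y i ⬝ᵥ (B i j) *ᵥ (y j) := by
      intro i j
      exact neg_le_of_abs_le (dot_bound (B i j) (y i) (y j))
    have hkey : ∑ i, ∑ j ∈ Finset.univ.erase i, s i j * N i * N j
        ≤ ∑ i, ∑ j ∈ Finset.univ.erase i, s i j * N i ^ 2 := by
      have hswap : (∑ i, ∑ j ∈ Finset.univ.erase i, s i j * N j ^ 2)
          = ∑ i, ∑ j ∈ Finset.univ.erase i, s i j * N i ^ 2 := by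
        rw [Finset.sum_comm' (t' := Finset.univ) (s' := fun j => Finset.univ.erase j)
          (by intro i j; simp [Finset.mem_erase, eq_comm])]
        exact Finset.sum_congr rfl fun i _ => Finset.sum_congr rfl fun j _ => by
          rw [hssym j i]
      calc ∑ i, ∑ j ∈ Finset.univ.erase i, s i j * N i * N j
          ≤ ∑ i, ∑ j ∈ Finset.univ.erase i, (s i j * N i ^ 2 + s i j * N j ^ 2) / 2 := by
            refine Finset.sum_le_sum fun i _ => Finset.sum_le_sum fun j _ => ?_
            nlinarith [hs0 i j, sq_nonneg (N i - N j), hN0 i, hN0 j]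
        _ = ((∑ i, ∑ j ∈ Finset.univ.erase i, s i j * N i ^ 2)
            + ∑ i, ∑ j ∈ Finset.univ.erase i, s i j * N j ^ 2) / 2 := by
            simp only [add_div, Finset.sum_add_distrib, Finset.sum_div]
        _ = ∑ i, ∑ j ∈ Finset.univ.erase i, s i j * N i ^ 2 := by rw [hswap]; ring
    rw [expand]
    have h0 : (0:ℝ) ≤ ∑ i, ((∑ j ∈ Finset.univ.erase i, s i j) * N i ^ 2
        - ∑ j ∈ Finset.univ.erase i, s i j * N i * N j) := by
      rw [Finset.sum_sub_distrib]
      have : ∀ i, (∑ j ∈ Finset.univ.erase i, s i j) * N i ^ 2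
          = ∑ j ∈ Finset.univ.erase i, s i j * N i ^ 2 := fun i => Finset.sum_mul ..
      simp_rw [this]
      exact sub_nonneg.mpr hkey
    calc (0:ℝ) ≤ ∑ i, ((∑ j ∈ Finset.univ.erase i, s i j) * N i ^ 2
        - ∑ j ∈ Finset.univ.erase i, s i j * N i * N j) := h0
      _ ≤ ∑ i, (y i ⬝ᵥ B i i *ᵥ y i + ∑ j ∈ Finset.univ.erase i, y i ⬝ᵥ B i j *ᵥ y j) := by
          refine Finset.sum_le_sum fun i _ => ?_
          have h1 := hdiagbound i
          have h2 : -(∑ j ∈ Finset.univ.erase i, s i j * N i * N j)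
              ≤ ∑ j ∈ Finset.univ.erase i, y i ⬝ᵥ B i j *ᵥ y j := by
            rw [← Finset.sum_neg_distrib]
            exact Finset.sum_le_sum fun j _ => hoff i j
          linarith
      _ = ∑ i, ∑ j, y i ⬝ᵥ B i j *ᵥ y j :=
          Finset.sum_congr rfl fun i _ => Finset.add_sum_erase _ (fun j => y i ⬝ᵥ B i j *ᵥ y j) (Finset.mem_univ i)
end

section
/- Let d, m be positive integers, T > 0, and let A : [0,T] → ℝ^{d×d} be continuous with pairwise commuting values, i.e., A_{t₁} A_{t₂} = A_{t₂} A_{t₁} for all t₁, t₂ ∈ [0,T]. Let H : [0,T] → ℝ^{m×d}, 𝒯 : [0,T] → ℝ^{d×m}, ρ : [0,T] → ℝ^d, and τ : [0,T] → ℝ^m be continuous, and let ΔX : [0,T] → ℝ^d be the unique continuously differentiable solution of ΔX'(t) = A_t ΔX(t) + ρ(t) − 𝒯_t (H_t ΔX(t) + τ(t)) with ΔX(0) = 0. Then H_t ΔX(t) + τ(t) = 0 for all t ∈ [0,T] if and only if H_t · exp(∫₀ᵗ A_u du) · ∫₀ᵗ exp(−∫₀ˢ A_u du) ρ(s) ds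 + τ(t) = 0 for all t ∈ [0,T]. -/
open Matrix Set

section AuxODE

open MeasureTheory intervalIntegral

attribute [local instance] Matrix.linftyOpNormedAddCommGroup Matrix.linftyOpNormedSpace
  Matrix.linftyOpNormedRing Matrix.linftyOpNormedAlgebra

variable {d : ℕ}

noncomputable instance matENormedAddMonoid : ENormedAddMonoid (Matrix (Fin d) (Fin d) ℝ) :=
  @NormedAddGroup.toENormedAddMonoid _ inferInstance

instance matPseudoMetrizable : TopologicalSpace.PseudoMetrizableSpace (Matrix (Fin d) (Fin d) ℝ) :=
  inferInstanceAs (TopologicalSpace.PseudoMetrizableSpace (Fin d → Fin d → ℝ))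

/-- `mulVec` as a continuous linear map in the matrix argument. -/
noncomputable def mulVecCLM (d : ℕ) :
    Matrix (Fin d) (Fin d) ℝ →L[ℝ] ((Fin d → ℝ) →L[ℝ] (Fin d → ℝ)) :=
  LinearMap.toContinuousLinearMap
    { toFun := fun M => LinearMap.toContinuousLinearMap M.mulVecLin
      map_add' := fun M N => by
        ext v i
        simp [Matrix.add_mulVec]
      map_smul' := fun c M => by
        ext v i
        simp [Matrix.smul_mulVec] }

@[simp] lemma mulVecCLM_apply (M : Matrix (Fin d) (Fin d) ℝ) (v : Fin d → ℝ) :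
    mulVecCLM d M v = M *ᵥ v := rfl

lemma integral_matrix_entry {a b : ℝ} {f : ℝ → Matrix (Fin d) (Fin d) ℝ}
    (hf : IntervalIntegrable f volume a b) (i j : Fin d) :
    (∫ s in a..b, f s) i j = ∫ s in a..b, f s i j := by
  exact (((LinearMap.toContinuousLinearMap
      ((LinearMap.proj j).comp (LinearMap.proj (R := ℝ) (φ := fun _ : Fin d => Fin d → ℝ) i))
      : Matrix (Fin d) (Fin d) ℝ →L[ℝ] ℝ)).intervalIntegral_comp_comm hf).symm

/-- Uniqueness for linear (affine) ODEs on `[0, T]`. -/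
lemma ode_unique {T : ℝ} (hT : 0 < T)
    {M : ℝ → Matrix (Fin d) (Fin d) ℝ} (hM : ContinuousOn M (Icc 0 T))
    {c : ℝ → Fin d → ℝ}
    {x y : ℝ → Fin d → ℝ}
    (hx : ∀ t ∈ Icc (0:ℝ) T, HasDerivWithinAt x (M t *ᵥ x t + c t) (Icc 0 T) t)
    (hy : ∀ t ∈ Icc (0:ℝ) T, HasDerivWithinAt y (M t *ᵥ y t + c t) (Icc 0 T) t)
    (h0 : x 0 = y 0) : EqOn x y (Icc 0 T) := by
  set proj : ℝ → ℝ := fun t => max 0 (min t T) with hproj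
  have hprojmem : ∀ t, proj t ∈ Icc (0:ℝ) T := fun t =>
    ⟨le_max_left _ _, max_le hT.le (min_le_right _ _)⟩
  have hprojeq : ∀ t ∈ Icc (0:ℝ) T, proj t = t := fun t ht => by
    simp only [hproj, min_eq_left ht.2, max_eq_right ht.1]
  obtain ⟨C, hC⟩ := IsCompact.exists_bound_of_continuousOn isCompact_Icc hM
  have hC0 : (0:ℝ) ≤ C := (norm_nonneg _).trans (hC 0 ⟨le_refl _, hT.le⟩)
  set v : ℝ → (Fin d → ℝ) → (Fin d → ℝ) := fun t z => M (proj t) *ᵥ z + c (proj t) with hv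
  have hlip : ∀ t, LipschitzOnWith C.toNNReal (v t) univ := by
    intro t
    apply LipschitzWith.lipschitzOnWith
    apply LipschitzWith.of_dist_le_mul
    intro z w
    have : v t z - v t w = M (proj t) *ᵥ (z - w) := by
      simp [hv, Matrix.mulVec_sub]
    rw [dist_eq_norm, dist_eq_norm, this]
    calc ‖M (proj t) *ᵥ (z - w)‖ ≤ ‖M (proj t)‖ * ‖z - w‖ :=
          Matrix.linfty_opNorm_mulVec _ _
      _ ≤ (C.toNNReal : ℝ) * ‖z - w‖ := by
          apply mul_le_mul_of_nonneg_right _ (norm_nonneg _)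
          exact (hC _ (hprojmem t)).trans (Real.le_coe_toNNReal C)
  have key : ∀ z : ℝ → Fin d → ℝ,
      (∀ t ∈ Icc (0:ℝ) T, HasDerivWithinAt z (M t *ᵥ z t + c t) (Icc 0 T) t) →
      ∀ t ∈ Ico (0:ℝ) T, HasDerivWithinAt z (v t (z t)) (Ici t) t := by
    intro z hz t ht
    have h1 := (hz t ⟨ht.1, ht.2.le⟩).mono_of_mem_nhdsWithin
      (Icc_mem_nhdsGE_of_mem ht)
    have : v t (z t) = M t *ᵥ z t + c t := by
      rw [hv]; simp only [hprojeq t ⟨ht.1, ht.2.le⟩]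
    rwa [this]
  exact ODE_solution_unique_of_mem_Icc_right (v := v) (s := fun _ => univ) (fun t _ => hlip t)
    (fun t ht => (hx t ht).continuousWithinAt) (key x hx) (fun _ _ => mem_univ _)
    (fun t ht => (hy t ht).continuousWithinAt) (key y hy) (fun _ _ => mem_univ _) h0

/-- The explicit solution formula satisfies the inhomogeneous linear ODE. -/
lemma sol_formula {T : ℝ} (hT : 0 < T)
    {A : ℝ → Matrix (Fin d) (Fin d) ℝ} (hA : ContinuousOn A (Icc 0 T))
    (hcomm : ∀ t₁ ∈ Icc (0:ℝ) T, ∀ t₂ ∈ Icc (0:ℝ) T, A t₁ * A t₂ = A t₂ * A t₁)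
    {ρ : ℝ → Fin d → ℝ} (hρ : ContinuousOn ρ (Icc 0 T)) :
    ∀ t ∈ Icc (0:ℝ) T,
      HasDerivWithinAt
        (fun r => NormedSpace.exp (Matrix.of fun i j => ∫ s in (0:ℝ)..r, A s i j) *ᵥ
          ∫ s in (0:ℝ)..r,
            NormedSpace.exp (-(Matrix.of fun i j => ∫ u in (0:ℝ)..s, A u i j)) *ᵥ ρ s)
        (A t *ᵥ (NormedSpace.exp (Matrix.of fun i j => ∫ s in (0:ℝ)..t, A s i j) *ᵥ
          ∫ s in (0:ℝ)..t,
            NormedSpace.exp (-(Matrix.of fun i j => ∫ u in (0:ℝ)..s, A u i j)) *ᵥ ρ s) + ρ t)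
        (Icc 0 T) t := by
  intro t ht
  set B : ℝ → Matrix (Fin d) (Fin d) ℝ := fun r => ∫ s in (0:ℝ)..r, A s with hB
  have hsubset : ∀ {r : ℝ}, r ∈ Icc (0:ℝ) T → Icc (0:ℝ) r ⊆ Icc (0:ℝ) T :=
    fun hr => Icc_subset_Icc le_rfl hr.2
  have hAI : ∀ r ∈ Icc (0:ℝ) T, IntervalIntegrable A volume 0 r := fun r hr =>
    (hA.mono (by rw [uIcc_of_le hr.1]; exact hsubset hr)).intervalIntegrable
  -- the `of`-matrix equals the Bochner integral
  have hofB : ∀ r ∈ Icc (0:ℝ) T,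
      (Matrix.of fun i j => ∫ s in (0:ℝ)..r, A s i j) = B r := by
    intro r hr
    ext i j
    rw [Matrix.of_apply]
    exact (integral_matrix_entry (hAI r hr) i j).symm
  -- derivative of B
  have hBd : ∀ r ∈ Icc (0:ℝ) T, HasDerivWithinAt B (A r) (Icc 0 T) r := by
    intro r hr
    haveI : Fact (r ∈ Icc (0:ℝ) T) := ⟨hr⟩
    exact intervalIntegral.integral_hasDerivWithinAt_right (hAI r hr)
      (hA.stronglyMeasurableAtFilter_nhdsWithin measurableSet_Icc r) (hA r hr)
  have hBc : ContinuousOn B (Icc 0 T) := fun r hr => (hBd r hr).continuousWithinAt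
  -- commutation facts
  have hABcomm : ∀ r ∈ Icc (0:ℝ) T, ∀ u ∈ Icc (0:ℝ) T, Commute (A r) (B u) := by
    intro r hr u hu
    show A r * B u = B u * A r
    have h1 : A r * B u = ∫ s in (0:ℝ)..u, A r * A s :=
      ((ContinuousLinearMap.mul ℝ (Matrix (Fin d) (Fin d) ℝ) (A r)).intervalIntegral_comp_comm (hAI u hu)).symm
    have h2 : B u * A r = ∫ s in (0:ℝ)..u, A s * A r :=
      (((ContinuousLinearMap.mul ℝ (Matrix (Fin d) (Fin d) ℝ)).flip (A r)).intervalIntegral_comp_comm (hAI u hu)).symm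
    rw [h1, h2]
    apply intervalIntegral.integral_congr
    intro s hs
    rw [uIcc_of_le hu.1] at hs
    exact hcomm r hr s (hsubset hu hs)
  have hBBcomm : ∀ r ∈ Icc (0:ℝ) T, ∀ u ∈ Icc (0:ℝ) T, Commute (B r) (B u) := by
    intro r hr u hu
    show B r * B u = B u * B r
    have h1 : B r * B u = ∫ s in (0:ℝ)..r, A s * B u :=
      (((ContinuousLinearMap.mul ℝ (Matrix (Fin d) (Fin d) ℝ)).flip (B u)).intervalIntegral_comp_comm (hAI r hr)).symm
    have h2 : B u * B r = ∫ s in (0:ℝ)..r, B u * A s :=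
      ((ContinuousLinearMap.mul ℝ (Matrix (Fin d) (Fin d) ℝ) (B u)).intervalIntegral_comp_comm (hAI r hr)).symm
    rw [h1, h2]
    apply intervalIntegral.integral_congr
    intro s hs
    rw [uIcc_of_le hr.1] at hs
    exact hABcomm s (hsubset hr hs) u hu
  -- derivative of exp ∘ B
  have hE : ∀ r ∈ Icc (0:ℝ) T,
      HasDerivWithinAt (fun w => NormedSpace.exp (B w))
        (A r * NormedSpace.exp (B r)) (Icc 0 T) r := by
    intro r hr
    have h1 : HasDerivWithinAt (fun w => B w - B r) (A r) (Icc 0 T) r :=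
      (hBd r hr).sub_const _
    have h2 : HasFDerivAt (NormedSpace.exp : Matrix (Fin d) (Fin d) ℝ → Matrix (Fin d) (Fin d) ℝ)
        (1 : Matrix (Fin d) (Fin d) ℝ →L[ℝ] Matrix (Fin d) (Fin d) ℝ) ((fun w => B w - B r) r) := by
      simp only [sub_self]
      exact hasFDerivAt_exp_zero
    have h3 := h2.comp_hasDerivWithinAt r h1
    have h4 := h3.mul_const (NormedSpace.exp (B r))
    have heq : ∀ w ∈ Icc (0:ℝ) T,
        NormedSpace.exp (B w) =
          NormedSpace.exp (B w - B r) * NormedSpace.exp (B r) := by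
      intro w hw
      exact (congrArg NormedSpace.exp (sub_add_cancel (B w) (B r))).symm.trans
        (NormedSpace.exp_add_of_commute (((hBBcomm w hw r hr)).sub_left (Commute.refl (B r))))
    have h5 := h4.congr heq (heq r hr)
    exact h5
  -- the integrand of Z
  set g : ℝ → Fin d → ℝ := fun r => NormedSpace.exp (-(B r)) *ᵥ ρ r with hg
  have hgc : ContinuousOn g (Icc 0 T) := by
    have h1 : ContinuousOn (fun r => mulVecCLM d (NormedSpace.exp (-(B r)))) (Icc 0 T) :=
      ((mulVecCLM d).continuous.comp
        (NormedSpace.exp_continuous)).comp_continuousOn hBc.neg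
    exact h1.clm_apply hρ
  have hgI : ∀ r ∈ Icc (0:ℝ) T, IntervalIntegrable g volume 0 r := fun r hr =>
    (hgc.mono (by rw [uIcc_of_le hr.1]; exact hsubset hr)).intervalIntegrable
  set Z : ℝ → Fin d → ℝ := fun r => ∫ s in (0:ℝ)..r, g s with hZ
  have hZd : ∀ r ∈ Icc (0:ℝ) T, HasDerivWithinAt Z (g r) (Icc 0 T) r := by
    intro r hr
    haveI : Fact (r ∈ Icc (0:ℝ) T) := ⟨hr⟩
    exact intervalIntegral.integral_hasDerivWithinAt_right (hgI r hr)
      (hgc.stronglyMeasurableAtFilter_nhdsWithin measurableSet_Icc r) (hgc r hr)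
  -- derivative of the product
  have hc : HasDerivWithinAt (fun r => mulVecCLM d (NormedSpace.exp (B r)))
      (mulVecCLM d (A t * NormedSpace.exp (B t))) (Icc 0 T) t :=
    (mulVecCLM d).hasFDerivAt.comp_hasDerivWithinAt t (hE t ht)
  have hYd := hc.clm_apply (hZd t ht)
  -- identify derivative value
  have hval : mulVecCLM d (A t * NormedSpace.exp (B t)) (Z t)
      + mulVecCLM d (NormedSpace.exp (B t)) (g t)
      = A t *ᵥ (NormedSpace.exp (B t) *ᵥ Z t) + ρ t := by
    rw [mulVecCLM_apply, mulVecCLM_apply, hg]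
    have he : NormedSpace.exp (B t) * NormedSpace.exp (-B t) = 1 :=
      (NormedSpace.exp_add_of_commute ((Commute.refl (B t)).neg_right)).symm.trans
        (by rw [add_neg_cancel]; exact NormedSpace.exp_zero)
    rw [Matrix.mulVec_mulVec, Matrix.mulVec_mulVec, he, Matrix.one_mulVec]
  rw [hval] at hYd
  -- rewrite the statement's function into `exp (B r) *ᵥ Z r`
  have hinner : ∀ r ∈ Icc (0:ℝ) T,
      (∫ s in (0:ℝ)..r,
        NormedSpace.exp (-(Matrix.of fun i j => ∫ u in (0:ℝ)..s, A u i j)) *ᵥ ρ s) = Z r := by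
    intro r hr
    apply intervalIntegral.integral_congr
    intro s hs
    rw [uIcc_of_le hr.1] at hs
    show NormedSpace.exp (-(Matrix.of fun i j => ∫ u in (0:ℝ)..s, A u i j)) *ᵥ ρ s = g s
    rw [hofB s (hsubset hr hs)]
  have hfun : ∀ r ∈ Icc (0:ℝ) T,
      (NormedSpace.exp (Matrix.of fun i j => ∫ s in (0:ℝ)..r, A s i j) *ᵥ
        ∫ s in (0:ℝ)..r,
          NormedSpace.exp (-(Matrix.of fun i j => ∫ u in (0:ℝ)..s, A u i j)) *ᵥ ρ s)
      = NormedSpace.exp (B r) *ᵥ Z r := by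
    intro r hr
    rw [hofB r hr, hinner r hr]
  rw [hfun t ht]
  exact hYd.congr hfun (hfun t ht)

end AuxODE

/-- characterization of undetectable deterministic attacks under commuting drift.
If `ΔX` solves the discrepancy dynamics
`ΔX' = A_t ΔX + ρ − 𝒯_t (H_t ΔX + τ)`, `ΔX(0) = 0`, then the innovation-drift condition
`H_t ΔX(t) + τ(t) ≡ 0` on `[0,T]` holds iff
`H_t · exp(∫₀ᵗ A) · ∫₀ᵗ exp(−∫₀ˢ A) ρ(s) ds + τ(t) ≡ 0` on `[0,T]`
(matrix integrals taken entrywise, `exp` the matrix exponential). -/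
theorem undetectable_iff_commuting
    (d m : ℕ) (hd : 0 < d) (hm : 0 < m) (T : ℝ) (hT : 0 < T)
    (A : ℝ → Matrix (Fin d) (Fin d) ℝ)
    (H : ℝ → Matrix (Fin m) (Fin d) ℝ)
    (𝒯 : ℝ → Matrix (Fin d) (Fin m) ℝ)
    (ρ : ℝ → Fin d → ℝ) (τ : ℝ → Fin m → ℝ)
    (hA : ContinuousOn A (Set.Icc 0 T))
    (hcomm : ∀ t₁ ∈ Set.Icc (0 : ℝ) T, ∀ t₂ ∈ Set.Icc (0 : ℝ) T,
      A t₁ * A t₂ = A t₂ * A t₁)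
    (hH : ContinuousOn H (Set.Icc 0 T)) (h𝒯 : ContinuousOn 𝒯 (Set.Icc 0 T))
    (hρ : ContinuousOn ρ (Set.Icc 0 T)) (hτ : ContinuousOn τ (Set.Icc 0 T))
    (ΔX : ℝ → Fin d → ℝ)
    (hΔX : ∀ t ∈ Set.Icc (0 : ℝ) T,
      HasDerivWithinAt ΔX
        (A t *ᵥ ΔX t + ρ t - 𝒯 t *ᵥ (H t *ᵥ ΔX t + τ t))
        (Set.Icc 0 T) t)
    (hΔX0 : ΔX 0 = 0) :
    (∀ t ∈ Set.Icc (0 : ℝ) T, H t *ᵥ ΔX t + τ t = 0) ↔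
    (∀ t ∈ Set.Icc (0 : ℝ) T,
      H t *ᵥ (NormedSpace.exp (Matrix.of fun i j => ∫ s in (0 : ℝ)..t, A s i j) *ᵥ
        ∫ s in (0 : ℝ)..t,
          NormedSpace.exp (-(Matrix.of fun i j => ∫ u in (0 : ℝ)..s, A u i j)) *ᵥ ρ s)
        + τ t = 0) := by
  set Y : ℝ → Fin d → ℝ := fun r =>
    NormedSpace.exp (Matrix.of fun i j => ∫ s in (0 : ℝ)..r, A s i j) *ᵥ
      ∫ s in (0 : ℝ)..r,
        NormedSpace.exp (-(Matrix.of fun i j => ∫ u in (0 : ℝ)..s, A u i j)) *ᵥ ρ s with hYdef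
  have hY' : ∀ t ∈ Icc (0:ℝ) T, HasDerivWithinAt Y (A t *ᵥ Y t + ρ t) (Icc 0 T) t := by
    intro t ht
    exact sol_formula hT hA hcomm hρ t ht
  have hY0 : Y 0 = 0 := by
    rw [hYdef]
    simp [intervalIntegral.integral_same, Matrix.mulVec_zero]
  constructor
  · -- forward: ΔX = Y via the dynamics x' = A x + ρ
    intro h
    have hx' : ∀ t ∈ Icc (0:ℝ) T, HasDerivWithinAt ΔX (A t *ᵥ ΔX t + ρ t) (Icc 0 T) t := by
      intro t ht
      have := hΔX t ht
      rwa [h t ht, Matrix.mulVec_zero, sub_zero] at this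
    have heq : EqOn ΔX Y (Icc 0 T) :=
      ode_unique hT hA hx' hY' (by rw [hΔX0, hY0])
    intro t ht
    show H t *ᵥ Y t + τ t = 0
    rw [← heq ht]
    exact h t ht
  · -- converse: ΔX = Y via the dynamics x' = (A - 𝒯H) x + (ρ - 𝒯 τ)
    intro h
    replace h : ∀ t ∈ Icc (0:ℝ) T, H t *ᵥ Y t + τ t = 0 := h
    have hMc : ContinuousOn (fun t => A t - 𝒯 t * H t) (Icc 0 T) := by
      have h1 : ContinuousOn (fun t => 𝒯 t * H t) (Icc 0 T) :=
        (Continuous.matrix_mul continuous_fst continuous_snd).comp_continuousOn (h𝒯.prodMk hH)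
      exact hA.sub h1
    have hdyn : ∀ t (x : Fin d → ℝ),
        (A t - 𝒯 t * H t) *ᵥ x + (ρ t - 𝒯 t *ᵥ τ t)
          = A t *ᵥ x + ρ t - 𝒯 t *ᵥ (H t *ᵥ x + τ t) := by
      intro t x
      rw [Matrix.sub_mulVec, Matrix.mulVec_add, ← Matrix.mulVec_mulVec]
      abel
    have hx' : ∀ t ∈ Icc (0:ℝ) T,
        HasDerivWithinAt ΔX ((A t - 𝒯 t * H t) *ᵥ ΔX t + (ρ t - 𝒯 t *ᵥ τ t)) (Icc 0 T) t := by
      intro t ht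
      rw [hdyn]
      exact hΔX t ht
    have hy' : ∀ t ∈ Icc (0:ℝ) T,
        HasDerivWithinAt Y ((A t - 𝒯 t * H t) *ᵥ Y t + (ρ t - 𝒯 t *ᵥ τ t)) (Icc 0 T) t := by
      intro t ht
      rw [hdyn, h t ht, Matrix.mulVec_zero, sub_zero]
      exact hY' t ht
    have heq : EqOn ΔX Y (Icc 0 T) :=
      ode_unique hT hMc hx' hy' (by rw [hΔX0, hY0])
    intro t ht
    rw [heq ht]
    exact h t ht
end

section
/- Let d, m be positive integers, T > 0, and let A : [0,T] → ℝ^{d×d}, H : [0,T] → ℝ^{m×d}, 𝒯 : [0,T] → ℝ^{d×m}, and τ : [0,T] → ℝ^m be continuous. Let ΔX : [0,T] → ℝ^d be the unique continuously differentiable solution of ΔX'(t) = A_t ΔX(t) − 𝒯_t (H_t ΔX(t) + τ(t)) with ΔX(0) = 0 (i.e., the discrepancy dynamics with state attack ρ ≡ 0). Then H_t ΔX(t) + τ(t) = 0 for all t ∈ [0,T] if and only if τ(t) = 0 for all t ∈ [0,T]. -/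
open Matrix Set

/-- Auxiliary: a solution of a linear ODE `f' = B t *ᵥ f` on `[0,T]` with `f 0 = 0`
is identically zero on `[0,T]`. -/
lemma linear_ode_zero_solution {d : ℕ} {T : ℝ} (hT : 0 < T)
    (B : ℝ → Matrix (Fin d) (Fin d) ℝ) (hB : ContinuousOn B (Set.Icc 0 T))
    (f : ℝ → Fin d → ℝ)
    (hf : ∀ t ∈ Set.Icc (0 : ℝ) T,
      HasDerivWithinAt f (B t *ᵥ f t) (Set.Icc 0 T) t)
    (hf0 : f 0 = 0) : ∀ t ∈ Set.Icc (0 : ℝ) T, f t = 0 := by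
  -- the linear map sending a matrix to its `mulVec` as a continuous linear map
  set Φ : Matrix (Fin d) (Fin d) ℝ →ₗ[ℝ] ((Fin d → ℝ) →L[ℝ] (Fin d → ℝ)) :=
    (LinearMap.toContinuousLinearMap.toLinearMap.comp
      (Matrix.toLin' : Matrix (Fin d) (Fin d) ℝ ≃ₗ[ℝ] _).toLinearMap) with hΦ
  have hΦapp : ∀ M x, Φ M x = M *ᵥ x := by
    intro M x
    simp [hΦ, Matrix.toLin'_apply]
  have hΦcont : Continuous Φ := Φ.continuous_of_finiteDimensional
  -- a uniform bound on the operator norms over the compact interval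
  obtain ⟨C, hC⟩ := (isCompact_Icc (a := (0:ℝ)) (b := T)).exists_bound_of_continuousOn
    (hΦcont.comp_continuousOn hB)
  have hC0 : 0 ≤ C := le_trans (norm_nonneg _) (hC 0 ⟨le_refl 0, hT.le⟩)
  -- the clamped vector field
  set proj : ℝ → ℝ := fun t => max 0 (min t T) with hproj
  have hprojmem : ∀ t, proj t ∈ Set.Icc (0:ℝ) T := fun t =>
    ⟨le_max_left _ _, max_le (hT.le) (min_le_right _ _)⟩
  have hprojeq : ∀ t ∈ Set.Icc (0:ℝ) T, proj t = t := by
    intro t ht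
    simp [hproj, min_eq_left ht.2, max_eq_right ht.1]
  set v : ℝ → (Fin d → ℝ) → (Fin d → ℝ) := fun t x => B (proj t) *ᵥ x with hv
  have hlip : ∀ t, LipschitzOnWith C.toNNReal (v t) Set.univ := by
    intro t
    apply LipschitzWith.lipschitzOnWith
    apply LipschitzWith.of_dist_le_mul
    intro x y
    have h1 : v t x - v t y = Φ (B (proj t)) (x - y) := by
      rw [hΦapp, hv]; simp [Matrix.mulVec_sub]
    rw [dist_eq_norm, dist_eq_norm, h1]
    calc ‖Φ (B (proj t)) (x - y)‖ ≤ ‖Φ (B (proj t))‖ * ‖x - y‖ :=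
          (Φ (B (proj t))).le_opNorm _
      _ ≤ C * ‖x - y‖ := by
          apply mul_le_mul_of_nonneg_right _ (norm_nonneg _)
          exact hC _ (hprojmem t)
    simp [Real.coe_toNNReal _ hC0]
  have hfc : ContinuousOn f (Set.Icc 0 T) := fun t ht => (hf t ht).continuousWithinAt
  have hf' : ∀ t ∈ Set.Ico (0:ℝ) T, HasDerivWithinAt f (v t (f t)) (Set.Ici t) t := by
    intro t ht
    have h1 : HasDerivWithinAt f (B t *ᵥ f t) (Set.Icc 0 T) t := hf t ⟨ht.1, ht.2.le⟩
    have h2 : HasDerivWithinAt f (B t *ᵥ f t) (Set.Icc t T) t :=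
      h1.mono (Set.Icc_subset_Icc_left ht.1)
    have h3 := h2.mono_of_mem_nhdsWithin (Icc_mem_nhdsGE_of_mem ⟨le_refl t, ht.2⟩)
    have heq : v t (f t) = B t *ᵥ f t := by
      simp only [hv]; rw [hprojeq t ⟨ht.1, ht.2.le⟩]
    rw [heq]; exact h3
  have hg' : ∀ t ∈ Set.Ico (0:ℝ) T,
      HasDerivWithinAt (fun _ : ℝ => (0 : Fin d → ℝ)) (v t 0) (Set.Ici t) t := by
    intro t ht
    have : v t 0 = 0 := by simp [hv, Matrix.mulVec_zero]
    rw [this]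
    exact hasDerivWithinAt_const _ _ _
  have := ODE_solution_unique_of_mem_Icc_right (fun t _ => hlip t) hfc hf'
    (fun t _ => Set.mem_univ _) continuousOn_const hg' (fun t _ => Set.mem_univ _) hf0
  exact fun t ht => this ht

/-- a pure observation attack is always detectable.
If `ΔX` solves the discrepancy dynamics with state attack `ρ ≡ 0`, i.e.
`ΔX' = A_t ΔX − 𝒯_t (H_t ΔX + τ)`, `ΔX(0) = 0`, then the undetectability condition
`H_t ΔX(t) + τ(t) ≡ 0` on `[0,T]` holds iff `τ ≡ 0` on `[0,T]`. -/
theorem pure_observation_attack_detectable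
    (d m : ℕ) (hd : 0 < d) (hm : 0 < m) (T : ℝ) (hT : 0 < T)
    (A : ℝ → Matrix (Fin d) (Fin d) ℝ)
    (H : ℝ → Matrix (Fin m) (Fin d) ℝ)
    (𝒯 : ℝ → Matrix (Fin d) (Fin m) ℝ)
    (τ : ℝ → Fin m → ℝ)
    (hA : ContinuousOn A (Set.Icc 0 T))
    (hH : ContinuousOn H (Set.Icc 0 T)) (h𝒯 : ContinuousOn 𝒯 (Set.Icc 0 T))
    (hτ : ContinuousOn τ (Set.Icc 0 T))
    (ΔX : ℝ → Fin d → ℝ)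
    (hΔX : ∀ t ∈ Set.Icc (0 : ℝ) T,
      HasDerivWithinAt ΔX
        (A t *ᵥ ΔX t - 𝒯 t *ᵥ (H t *ᵥ ΔX t + τ t))
        (Set.Icc 0 T) t)
    (hΔX0 : ΔX 0 = 0) :
    (∀ t ∈ Set.Icc (0 : ℝ) T, H t *ᵥ ΔX t + τ t = 0) ↔
    (∀ t ∈ Set.Icc (0 : ℝ) T, τ t = 0) := by
  constructor
  · -- undetectability ⇒ τ ≡ 0
    intro h
    have hf : ∀ t ∈ Set.Icc (0 : ℝ) T,
        HasDerivWithinAt ΔX (A t *ᵥ ΔX t) (Set.Icc 0 T) t := by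
      intro t ht
      have := hΔX t ht
      rwa [h t ht, Matrix.mulVec_zero, sub_zero] at this
    have hzero := linear_ode_zero_solution hT A hA ΔX hf hΔX0
    intro t ht
    have h1 := h t ht
    rw [hzero t ht, Matrix.mulVec_zero, zero_add] at h1
    exact h1
  · -- τ ≡ 0 ⇒ ΔX ≡ 0 ⇒ undetectability
    intro h
    set B : ℝ → Matrix (Fin d) (Fin d) ℝ := fun t => A t - 𝒯 t * H t with hB
    have hBc : ContinuousOn B (Set.Icc 0 T) := by
      apply hA.sub
      intro t ht
      exact ((continuous_fst.matrix_mul continuous_snd).continuousAt.comp_continuousWithinAt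
        ((h𝒯 t ht).prodMk (hH t ht)))
    have hf : ∀ t ∈ Set.Icc (0 : ℝ) T,
        HasDerivWithinAt ΔX (B t *ᵥ ΔX t) (Set.Icc 0 T) t := by
      intro t ht
      have h0 := hΔX t ht
      have : A t *ᵥ ΔX t - 𝒯 t *ᵥ (H t *ᵥ ΔX t + τ t) = B t *ᵥ ΔX t := by
        rw [h t ht, add_zero, hB, Matrix.sub_mulVec, Matrix.mulVec_mulVec]
      rwa [this] at h0
    have hzero := linear_ode_zero_solution hT B hBc ΔX hf hΔX0
    intro t ht
    rw [hzero t ht, Matrix.mulVec_zero, zero_add, h t ht]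
end

section
/- Let d be a positive integer and let A : ℝ → ℝ^{d×d} be continuous with pairwise commuting values, i.e., A_s A_t = A_t A_s for all s, t ∈ ℝ. Define G(t) := ∫₀ᵗ A_s ds. Then the map t ↦ exp(G(t)) is differentiable on ℝ, and its derivative at every t equals A_t · exp(G(t)) = exp(G(t)) · A_t. -/
open Matrix NormedSpace MeasureTheory intervalIntegral

attribute [local instance] Matrix.normedAddCommGroup Matrix.normedSpace


def MatL (d : ℕ) : Type := Matrix (Fin d) (Fin d) ℝ
noncomputable instance (d : ℕ) : NormedRing (MatL d) := Matrix.linftyOpNormedRing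
noncomputable instance (d : ℕ) : NormedAlgebra ℝ (MatL d) := Matrix.linftyOpNormedAlgebra
instance (d : ℕ) : FiniteDimensional ℝ (MatL d) :=
  inferInstanceAs (FiniteDimensional ℝ (Matrix (Fin d) (Fin d) ℝ))
instance (d : ℕ) : CompleteSpace (MatL d) := FiniteDimensional.complete ℝ _

def matLAlgEquiv (d : ℕ) : MatL d ≃ₐ[ℝ] Matrix (Fin d) (Fin d) ℝ :=
  AlgEquiv.refl (R := ℝ) (A₁ := Matrix (Fin d) (Fin d) ℝ)

noncomputable def matLCLE (d : ℕ) : MatL d ≃L[ℝ] Matrix (Fin d) (Fin d) ℝ :=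
  LinearEquiv.toContinuousLinearEquiv (matLAlgEquiv d).toLinearEquiv

noncomputable def entryCLM (d : ℕ) (i j : Fin d) : Matrix (Fin d) (Fin d) ℝ →L[ℝ] ℝ :=
  LinearMap.mkContinuous
    { toFun := fun M => M i j, map_add' := fun _ _ => rfl, map_smul' := fun _ _ => rfl } 1
    (fun M => by rw [one_mul]; exact M.norm_entry_le_entrywise_sup_norm)


set_option maxHeartbeats 1000000 in
/-- derivative of the exponential of the integral of a commuting family.
For `A : ℝ → ℝ^{d×d}` continuous with pairwise commuting values and
`G(t) = ∫₀ᵗ A_s ds` (entrywise), the map `t ↦ exp(G(t))` is differentiable with derivative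
`A_t · exp(G(t)) = exp(G(t)) · A_t` at every `t`. -/
theorem deriv_exp_integral_commuting
    (d : ℕ) (hd : 0 < d)
    (A : ℝ → Matrix (Fin d) (Fin d) ℝ)
    (hA : Continuous A)
    (hcomm : ∀ s t : ℝ, A s * A t = A t * A s)
    (G : ℝ → Matrix (Fin d) (Fin d) ℝ)
    (hG : G = fun t => Matrix.of fun i j => ∫ s in (0 : ℝ)..t, A s i j) :
    ∀ t : ℝ,
      HasDerivAt (fun u => NormedSpace.exp (G u)) (A t * NormedSpace.exp (G t)) t ∧
      A t * NormedSpace.exp (G t) = NormedSpace.exp (G t) * A t := by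
  haveI : CompleteSpace (Matrix (Fin d) (Fin d) ℝ) := FiniteDimensional.complete ℝ _
  intro t
  set e := matLAlgEquiv d with he_def
  set eL := matLCLE d with heL_def
  have heLe : ∀ x : MatL d, eL x = e x := fun _ => rfl
  let B : ℝ → MatL d := A
  have hB : Continuous B := eL.symm.continuous.comp hA
  have hBint : ∀ a b : ℝ, IntervalIntegrable B volume a b := fun a b =>
    (hB.intervalIntegrable a b)
  letI : ENormedAddMonoid (Matrix (Fin d) (Fin d) ℝ) :=
    @NormedAddGroup.toENormedAddMonoid _ Matrix.normedAddCommGroup.toNormedAddGroup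
  have hAint : ∀ a b : ℝ, IntervalIntegrable A volume a b := fun a b =>
    (hA.intervalIntegrable a b)
  let GM : ℝ → MatL d := fun u => ∫ s in (0:ℝ)..u, B s
  -- B values commute
  have hBcomm : ∀ s r : ℝ, B s * B r = B r * B s := fun s r => hcomm s r
  -- B commutes with integrals of B
  have hBG : ∀ (r a b : ℝ), B r * (∫ s in a..b, B s) = (∫ s in a..b, B s) * B r := by
    intro r a b
    calc B r * (∫ s in a..b, B s)
        = ∫ s in a..b, B r * B s :=
          ((ContinuousLinearMap.mul ℝ (MatL d) (B r)).intervalIntegral_comp_comm (hBint a b)).symm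
      _ = ∫ s in a..b, B s * B r :=
          intervalIntegral.integral_congr (fun s _ => (hBcomm r s))
      _ = (∫ s in a..b, B s) * B r :=
          ((ContinuousLinearMap.mul ℝ (MatL d)).flip (B r)).intervalIntegral_comp_comm (hBint a b)
  -- integrals of B commute with integrals of B
  have hGG : ∀ (a b c f : ℝ),
      (∫ s in a..b, B s) * (∫ s in c..f, B s) = (∫ s in c..f, B s) * (∫ s in a..b, B s) := by
    intro a b c f
    calc (∫ s in a..b, B s) * (∫ s in c..f, B s)
        = ∫ s in a..b, B s * (∫ s in c..f, B s) :=
          (((ContinuousLinearMap.mul ℝ (MatL d)).flip (∫ s in c..f, B s)).intervalIntegral_comp_comm (hBint a b)).symm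
      _ = ∫ s in a..b, (∫ s in c..f, B s) * B s :=
          intervalIntegral.integral_congr (fun s _ => (hBG s c f))
      _ = (∫ s in c..f, B s) * (∫ s in a..b, B s) :=
          (ContinuousLinearMap.mul ℝ (MatL d) (∫ s in c..f, B s)).intervalIntegral_comp_comm (hBint a b)
  -- eL of GM is G
  have heG : ∀ u : ℝ, e (GM u) = G u := by
    intro u
    rw [← heLe, heL_def]
    rw [show (matLCLE d) (GM u)
        = ∫ s in (0:ℝ)..u, (matLCLE d).toContinuousLinearMap (B s) from
      ((matLCLE d).toContinuousLinearMap.intervalIntegral_comp_comm (hBint 0 u)).symm]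
    rw [hG]
    ext i j
    have := (entryCLM d i j).intervalIntegral_comp_comm (hAint 0 u)
    exact this.symm
  -- shifted integral
  let HM : ℝ → MatL d := fun u => ∫ s in t..u, B s
  have hGMsplit : ∀ u : ℝ, GM u = HM u + GM t := by
    intro u
    have h := intervalIntegral.integral_add_adjacent_intervals (hBint 0 t) (hBint t u)
    show (∫ s in (0:ℝ)..u, B s) = (∫ s in t..u, B s) + ∫ s in (0:ℝ)..t, B s
    rw [← h]; abel
  have hHMeq : ∀ u : ℝ, HM u = GM u - GM t := by
    intro u; rw [hGMsplit u]; abel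
  have hcommH : ∀ u, Commute (HM u) (GM t) := by
    intro u
    have h1 : Commute (GM u) (GM t) := hGG 0 u 0 t
    rw [hHMeq u]
    exact h1.sub_left (Commute.refl _)
  have hsplit : ∀ u, exp (GM u) = exp (HM u) * exp (GM t) := by
    intro u
    letI : NormedAlgebra ℚ (MatL d) := NormedAlgebra.restrictScalars ℚ ℝ (MatL d)
    rw [hGMsplit u, NormedSpace.exp_add_of_commute (hcommH u)]
  have hHM : HasDerivAt HM (B t) t :=
    intervalIntegral.integral_hasDerivAt_right (hBint t t)
      (hB.stronglyMeasurableAtFilter _ _) hB.continuousAt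
  have hHM0 : HM t = 0 := intervalIntegral.integral_same
  have hexpHM : HasDerivAt (fun u => exp (HM u)) (B t) t := by
    have h0 : HasFDerivAt (exp) (1 : MatL d →L[ℝ] MatL d) (HM t) := by
      rw [hHM0]; exact hasFDerivAt_exp_zero
    have h := h0.comp_hasDerivAt t hHM
    exact h
  have hmul : HasDerivAt (fun u => exp (HM u) * exp (GM t)) (B t * exp (GM t)) t :=
    hexpHM.mul_const _
  have hMainM : HasDerivAt (fun u => exp (GM u)) (B t * exp (GM t)) t := by
    rw [show (fun u => exp (GM u)) = fun u => exp (HM u) * exp (GM t) from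
      funext hsplit]
    exact hmul
  have hPush : HasDerivAt (fun u => eL (exp (GM u))) (eL (B t * exp (GM t))) t :=
    eL.toContinuousLinearMap.hasFDerivAt.comp_hasDerivAt t hMainM
  have hmapexp : ∀ x : MatL d, e (exp x) = exp (e x) := by
    intro x
    simp only [exp_eq_tsum ℝ]
    have hs : Summable (fun n : ℕ => (n.factorial : ℝ)⁻¹ • x ^ n) := expSeries_summable' x
    have h2 := (hs.hasSum.mapL (matLCLE d).toContinuousLinearMap).tsum_eq
    have h3 : ∀ n : ℕ, (matLCLE d).toContinuousLinearMap ((n.factorial : ℝ)⁻¹ • x ^ n)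
        = (n.factorial : ℝ)⁻¹ • (e x) ^ n := by
      intro n
      rw [_root_.map_smul]
      congr 1
    calc e (∑' n : ℕ, (n.factorial : ℝ)⁻¹ • x ^ n)
        = ∑' n : ℕ, (matLCLE d).toContinuousLinearMap ((n.factorial : ℝ)⁻¹ • x ^ n) := h2.symm
      _ = ∑' n : ℕ, (n.factorial : ℝ)⁻¹ • (e x) ^ n := tsum_congr h3
  have heB : ∀ s : ℝ, e (B s) = A s := fun _ => rfl
  have hval : eL (B t * exp (GM t)) = A t * exp (G t) := by
    rw [heLe, _root_.map_mul, hmapexp, heG, heB]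
  constructor
  · have hfun : (fun u => eL (exp (GM u))) = fun u => exp (G u) :=
      funext fun u => by rw [heLe, hmapexp, heG]
    rw [← hfun, ← hval]
    exact hPush
  · have hc : Commute (B t) (GM t) := hBG t 0 t
    have hce := (hc.exp_right).eq
    have h2 := congrArg e hce
    rw [_root_.map_mul, _root_.map_mul, hmapexp, heG, heB] at h2
    exact h2
end

section
/- Let d, m be positive integers, T > 0, x₀ ∈ ℝ^d, and λ ≥ 0. Let A : [0,T] → ℝ^{d×d}, H : [0,T] → ℝ^{m×d}, R : [0,T] → S^d, Q : [0,T] → S^d with each Q_t positive semidefinite, K : [0,T] → S^d with each K_t positive semidefinite, F : [0,T] → S^d, f̄, a, r : [0,T] → ℝ^d, and P : [0,T] → S^d with each P_t positive definite, all continuous, and let W ∈ S^m be positive definite; set Θ_t := R_t H_tᵀ W^{-1} H_t, 𝒯_t := R_t H_tᵀ W^{-1}, Λ_t := R_t H_tᵀ W^{-1} H_t R_t. For continuous controls ρ : [0,T] → ℝ^d and τ : [0,T] → ℝ^m, let (m^c, m^a) be the unique solution of ṁ^c = A_t m^c − K_t F_t m^a + a_t − (1/2)K_t f̄_t + ρ_t,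 ṁ^a = Θ_t m^c + (A_t − K_t F_t − Θ_t) m^a + 𝒯_t τ_t + a_t − (1/2)K_t f̄_t, with m^c(0) = m^a(0) = x₀, and define the cost 𝒥(ρ, τ) := ∫₀ᵀ [ (1/2)(H_t(m^c_t − m^a_t) + τ_t)ᵀ W^{-1} (H_t(m^c_t − m^a_t) + τ_t) + (1/2) ρ_tᵀ P_t ρ_t − λ( (m^c_t − r_t)ᵀ Q_t (m^c_t − r_t) + (F_t m^a_t + (1/2) f̄_t)ᵀ K_t (F_t m^a_t + (1/2) f̄_t) ) ] dt. Define block coefficients 𝒫_t := [[A_t, −K_tF_t],[0, A_t − K_tF_t]] ∈ ℝ^{2d×2d}, 𝓡_t := diag(P_t^{-1}, Λ_t), 𝒬_t := diag(−2λ Q_t, −2λ F_t K_t F_t), α_t := (a_t − (1/2)K_t f̄_t, a_t − (1/2)K_t f̄_t) ∈ ℝ^{2d}, ℓ_t := (2λ Q_t r_t, −λ F_t K_t f̄_t) ∈ ℝ^{2d}. Suppose M : [0,T] → S^{2d} and 𝐟 : [0,T] → ℝ^{2d} are continuously differentiable and satisfy Ṁ + 𝒫ᵀM + M𝒫 − M𝓡M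 + 𝒬 = 0 with M_T = 0 and 𝐟̇ + 𝒫ᵀ𝐟 − M𝓡𝐟 + Mα + ℓ = 0 with 𝐟_T = 0. Let (m^{c*}, m^{a*}) be the solution of the state dynamics under the feedback controls ρ*_t := −P_t^{-1} y^c_t and τ*_t := −H_t R_t y^a_t − H_t(m^{c*}_t − m^{a*}_t), where (y^c_t, y^a_t) := M_t · (m^{c*}_t, m^{a*}_t) + 𝐟_t. Then ρ* and τ* are continuous and for every pair of continuous controls (ρ, τ), 𝒥(ρ*, τ*) ≤ 𝒥(ρ, τ). -/
open Matrix Set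

attribute [local instance] Matrix.normedAddCommGroup Matrix.normedSpace

-- ### derivative helpers
theorem hdw_dot {n : Type*} [Fintype n] {f g : ℝ → n → ℝ} {f' g' : n → ℝ} {s : Set ℝ} {t : ℝ}
    (hf : HasDerivWithinAt f f' s t) (hg : HasDerivWithinAt g g' s t) :
    HasDerivWithinAt (fun u => f u ⬝ᵥ g u) (f' ⬝ᵥ g t + f t ⬝ᵥ g') s t := by
  simp only [dotProduct, Finset.sum_add_distrib.symm]
  exact HasDerivWithinAt.fun_sum (fun i _ =>
    ((hasDerivWithinAt_pi.1 hf i).mul (hasDerivWithinAt_pi.1 hg i)))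

theorem hdw_mulVec {n p : Type*} [Fintype n] [Fintype p] {M : ℝ → Matrix n p ℝ}
    {M' : Matrix n p ℝ} {x : ℝ → p → ℝ} {x' : p → ℝ} {s : Set ℝ} {t : ℝ}
    (hM : HasDerivWithinAt M M' s t) (hx : HasDerivWithinAt x x' s t) :
    HasDerivWithinAt (fun u => M u *ᵥ x u) (M' *ᵥ x t + M t *ᵥ x') s t := by
  rw [hasDerivWithinAt_pi]
  intro i
  exact hdw_dot (hasDerivWithinAt_pi.1 hM i) hx

theorem hdw_sumElim {d p : ℕ} {f : ℝ → Fin d → ℝ} {g : ℝ → Fin p → ℝ}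
    {f' : Fin d → ℝ} {g' : Fin p → ℝ} {s : Set ℝ} {t : ℝ}
    (hf : HasDerivWithinAt f f' s t) (hg : HasDerivWithinAt g g' s t) :
    HasDerivWithinAt (fun u => Sum.elim (f u) (g u)) (Sum.elim f' g') s t := by
  rw [hasDerivWithinAt_pi]
  rintro (i | i)
  · exact hasDerivWithinAt_pi.1 hf i
  · exact hasDerivWithinAt_pi.1 hg i

-- ### continuity helpers
theorem con_apply {n : Type*} {f : ℝ → n → ℝ} {s : Set ℝ} (hf : ContinuousOn f s) (i : n) :
    ContinuousOn (fun t => f t i) s := (continuous_apply i).comp_continuousOn hf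

theorem con_apply2 {n p : Type*} {f : ℝ → Matrix n p ℝ} {s : Set ℝ} (hf : ContinuousOn f s)
    (i : n) : ContinuousOn (fun t => f t i) s := (continuous_apply i).comp_continuousOn hf

theorem con_dot {n : Type*} [Fintype n] {f g : ℝ → n → ℝ} {s : Set ℝ}
    (hf : ContinuousOn f s) (hg : ContinuousOn g s) :
    ContinuousOn (fun t => f t ⬝ᵥ g t) s := by
  simp only [dotProduct]
  exact continuousOn_finset_sum _ (fun i _ => (con_apply hf i).mul (con_apply hg i))

theorem con_mulVec {n p : Type*} [Fintype n] [Fintype p] {M : ℝ → Matrix n p ℝ}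
    {x : ℝ → p → ℝ} {s : Set ℝ} (hM : ContinuousOn M s) (hx : ContinuousOn x s) :
    ContinuousOn (fun t => M t *ᵥ x t) s := by
  apply continuousOn_pi.2
  intro i
  exact con_dot (con_apply2 hM i) hx

theorem con_entry {n p : Type*} {f : ℝ → Matrix n p ℝ} {s : Set ℝ} (hf : ContinuousOn f s)
    (i : n) (j : p) : ContinuousOn (fun t => f t i j) s := con_apply (con_apply2 hf i) j

theorem con_transpose {n p : Type*} {f : ℝ → Matrix n p ℝ} {s : Set ℝ}
    (hf : ContinuousOn f s) : ContinuousOn (fun t => (f t)ᵀ) s := by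
  apply continuousOn_pi.2; intro i; apply continuousOn_pi.2; intro j
  exact con_entry hf j i

theorem con_matmul {n p q : Type*} [Fintype n] [Fintype p] [Fintype q]
    {M : ℝ → Matrix n p ℝ} {N : ℝ → Matrix p q ℝ} {s : Set ℝ}
    (hM : ContinuousOn M s) (hN : ContinuousOn N s) :
    ContinuousOn (fun t => M t * N t) s := by
  apply continuousOn_pi.2; intro i; apply continuousOn_pi.2; intro j
  have h : ∀ t, (M t * N t) i j = (fun u => M u i) t ⬝ᵥ (fun u k => N u k j) t := fun t => by
    simp [Matrix.mul_apply, dotProduct]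
  simp only [h]
  exact con_dot (con_apply2 hM i) (continuousOn_pi.2 fun k => con_entry hN k j)

theorem con_inv {n : ℕ} {P : ℝ → Matrix (Fin n) (Fin n) ℝ} {s : Set ℝ}
    (hP : ContinuousOn P s) (h : ∀ t ∈ s, (P t).PosDef) :
    ContinuousOn (fun t => (P t)⁻¹) s := by
  have e : ∀ t ∈ s, (P t).det⁻¹ • (P t).adjugate = (P t)⁻¹ := by
    intro t ht; rw [Matrix.inv_def, Ring.inverse_eq_inv']
  apply ContinuousOn.congr _ (fun t ht => (e t ht).symm)
  apply ContinuousOn.fun_smul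
  · exact ContinuousOn.inv₀ ((continuous_id.matrix_det).comp_continuousOn hP)
      (fun t ht => ne_of_gt (h t ht).det_pos)
  · exact (continuous_id.matrix_adjugate).comp_continuousOn hP

theorem con_fromBlocks {n p q r : Type*} {A : ℝ → Matrix n q ℝ} {B : ℝ → Matrix n r ℝ}
    {C : ℝ → Matrix p q ℝ} {D : ℝ → Matrix p r ℝ} {s : Set ℝ}
    (hA : ContinuousOn A s) (hB : ContinuousOn B s) (hC : ContinuousOn C s)
    (hD : ContinuousOn D s) :
    ContinuousOn (fun t => Matrix.fromBlocks (A t) (B t) (C t) (D t)) s := by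
  apply continuousOn_pi.2
  rintro (i | i) <;> apply continuousOn_pi.2 <;> rintro (j | j)
  · simpa using con_entry hA i j
  · simpa using con_entry hB i j
  · simpa using con_entry hC i j
  · simpa using con_entry hD i j

theorem con_sumElim {d p : ℕ} {f : ℝ → Fin d → ℝ} {g : ℝ → Fin p → ℝ} {s : Set ℝ}
    (hf : ContinuousOn f s) (hg : ContinuousOn g s) :
    ContinuousOn (fun t => Sum.elim (f t) (g t)) s := by
  apply continuousOn_pi.2
  rintro (i | i)
  · exact con_apply hf i
  · exact con_apply hg i

theorem con_integrable {g : ℝ → ℝ} {T : ℝ} (hT : 0 ≤ T)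
    (hg : ContinuousOn g (Set.Icc 0 T)) :
    IntervalIntegrable g MeasureTheory.volume 0 T := by
  apply ContinuousOn.intervalIntegrable; rwa [Set.uIcc_of_le hT]

theorem herm_symm {n : Type*} (M : Matrix n n ℝ) (h : M.IsHermitian) : M.IsSymm := by
  rw [Matrix.IsHermitian] at h
  rw [Matrix.IsSymm]
  rw [Matrix.conjTranspose_eq_transpose_of_trivial] at h
  exact h

theorem psd_nonneg {n : Type*} [Fintype n] (M : Matrix n n ℝ) (h : M.PosSemidef)
    (x : n → ℝ) : 0 ≤ x ⬝ᵥ (M *ᵥ x) := by simpa using h.dotProduct_mulVec_nonneg x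

theorem dot_swap {n : Type*} [Fintype n] (M : Matrix n n ℝ) (h : M.IsSymm) (x y : n → ℝ) :
    x ⬝ᵥ (M *ᵥ y) = y ⬝ᵥ (M *ᵥ x) := by
  rw [dotProduct_mulVec, ← mulVec_transpose, h.eq, dotProduct_comm]

theorem dot_trans {n p : Type*} [Fintype n] [Fintype p] (A : Matrix n p ℝ) (x : p → ℝ) (w : n → ℝ) :
    x ⬝ᵥ (Aᵀ *ᵥ w) = (A *ᵥ x) ⬝ᵥ w := by
  rw [dotProduct_mulVec, vecMul_transpose, dotProduct_comm]

theorem trans_dot {n p : Type*} [Fintype n] [Fintype p] (A : Matrix n p ℝ) (x : p → ℝ) (w : n → ℝ) :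
    (A *ᵥ x) ⬝ᵥ w = x ⬝ᵥ (Aᵀ *ᵥ w) := (dot_trans A x w).symm

theorem sq_exp {n : Type*} [Fintype n] (Wi : Matrix n n ℝ) (hs : Wi.IsSymm) (u v : n → ℝ) :
    (u + v) ⬝ᵥ (Wi *ᵥ (u + v)) = u ⬝ᵥ (Wi *ᵥ u) + 2 * (u ⬝ᵥ (Wi *ᵥ v)) + v ⬝ᵥ (Wi *ᵥ v) := by
  rw [Matrix.mulVec_add, add_dotProduct, dotProduct_add, dotProduct_add,
    dot_swap Wi hs v u]
  ring


theorem sq_expP {n : Type*} [Fintype n] [DecidableEq n] (Pm : Matrix n n ℝ) (hPP : Pm * Pm⁻¹ = 1)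
    (hs : Pm.IsSymm) (his : (Pm⁻¹).IsSymm) (u w : n → ℝ) :
    (u + Pm⁻¹ *ᵥ w) ⬝ᵥ (Pm *ᵥ (u + Pm⁻¹ *ᵥ w))
      = u ⬝ᵥ (Pm *ᵥ u) + 2 * (u ⬝ᵥ w) + w ⬝ᵥ (Pm⁻¹ *ᵥ w) := by
  have h1 : Pm *ᵥ (Pm⁻¹ *ᵥ w) = w := by rw [Matrix.mulVec_mulVec, hPP, Matrix.one_mulVec]
  rw [sq_exp Pm hs, h1, dotProduct_comm (Pm⁻¹ *ᵥ w) w]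

theorem Bgen {n : Type*} [Fintype n] (calP calR calQ Mb : Matrix n n ℝ)
    (hMs : Mb.IsSymm) (hcRs : calR.IsSymm) (X DX fvv αv ℓ e : n → ℝ)
    (hDXeq : DX = calP *ᵥ X + αv + e)
    (DM : Matrix n n ℝ) (hDM : DM = -(calPᵀ * Mb + Mb * calP - Mb * calR * Mb + calQ))
    (Dfv : n → ℝ) (hDfv : Dfv = -(calPᵀ *ᵥ fvv - (Mb * calR) *ᵥ fvv + Mb *ᵥ αv + ℓ)) :
    (1 / 2 : ℝ) * (DX ⬝ᵥ (Mb *ᵥ X) + X ⬝ᵥ (DM *ᵥ X + Mb *ᵥ DX)) + (Dfv ⬝ᵥ X + fvv ⬝ᵥ DX)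
      = e ⬝ᵥ (Mb *ᵥ X + fvv)
        + (1 / 2 : ℝ) * ((Mb *ᵥ X + fvv) ⬝ᵥ (calR *ᵥ (Mb *ᵥ X + fvv)))
        - (1 / 2 : ℝ) * (fvv ⬝ᵥ (calR *ᵥ fvv)) + αv ⬝ᵥ fvv - ℓ ⬝ᵥ X
        - (1 / 2 : ℝ) * (X ⬝ᵥ (calQ *ᵥ X)) := by
  have eP1 : DX ⬝ᵥ (Mb *ᵥ X)
      = (calP *ᵥ X) ⬝ᵥ (Mb *ᵥ X) + αv ⬝ᵥ (Mb *ᵥ X) + e ⬝ᵥ (Mb *ᵥ X) := by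
    rw [hDXeq, add_dotProduct, add_dotProduct]
  have eP2 : X ⬝ᵥ (Mb *ᵥ DX)
      = (calP *ᵥ X) ⬝ᵥ (Mb *ᵥ X) + αv ⬝ᵥ (Mb *ᵥ X) + e ⬝ᵥ (Mb *ᵥ X) := by
    rw [dot_swap Mb hMs X DX]; exact eP1
  have eP3 : X ⬝ᵥ (DM *ᵥ X)
      = -(2 * ((calP *ᵥ X) ⬝ᵥ (Mb *ᵥ X))) + (Mb *ᵥ X) ⬝ᵥ (calR *ᵥ (Mb *ᵥ X))
        - X ⬝ᵥ (calQ *ᵥ X) := by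
    rw [hDM, Matrix.neg_mulVec, dotProduct_neg, Matrix.add_mulVec, Matrix.sub_mulVec,
      Matrix.add_mulVec, dotProduct_add, dotProduct_sub, dotProduct_add]
    simp only [← Matrix.mulVec_mulVec]
    rw [dot_trans calP X (Mb *ᵥ X), dot_swap Mb hMs X (calP *ᵥ X),
      dot_swap Mb hMs X (calR *ᵥ (Mb *ᵥ X)), dotProduct_comm (calR *ᵥ (Mb *ᵥ X)) (Mb *ᵥ X)]
    ring
  have eP4 : Dfv ⬝ᵥ X
      = -((calP *ᵥ X) ⬝ᵥ fvv) + (Mb *ᵥ X) ⬝ᵥ (calR *ᵥ fvv) - αv ⬝ᵥ (Mb *ᵥ X) - ℓ ⬝ᵥ X := by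
    rw [hDfv, neg_dotProduct, add_dotProduct, add_dotProduct,
      sub_dotProduct]
    simp only [← Matrix.mulVec_mulVec]
    rw [dotProduct_comm (calPᵀ *ᵥ fvv) X, dot_trans calP X fvv,
      dotProduct_comm (Mb *ᵥ (calR *ᵥ fvv)) X, dot_swap Mb hMs X (calR *ᵥ fvv),
      dotProduct_comm (calR *ᵥ fvv) (Mb *ᵥ X),
      dotProduct_comm (Mb *ᵥ αv) X, dot_swap Mb hMs X αv]
    ring
  have eP5 : fvv ⬝ᵥ DX = (calP *ᵥ X) ⬝ᵥ fvv + αv ⬝ᵥ fvv + e ⬝ᵥ fvv := by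
    rw [dotProduct_comm, hDXeq, add_dotProduct, add_dotProduct]
  rw [dotProduct_add X (DM *ᵥ X) (Mb *ᵥ DX), eP1, eP2, eP3, eP4, eP5,
    dotProduct_add e (Mb *ᵥ X) fvv, sq_exp calR hcRs (Mb *ᵥ X) fvv]
  ring

theorem sum_elim_add {d m : ℕ} (a b : Fin d → ℝ) (c e : Fin m → ℝ) :
    Sum.elim a c + Sum.elim b e = Sum.elim (a + b) (c + e) := by
  funext i; cases i <;> rfl

set_option maxHeartbeats 1000000 in
theorem pointwise_key (d m : ℕ) (lam : ℝ)
    (Am Qm Km Fm Pm Rm : Matrix (Fin d) (Fin d) ℝ)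
    (Hm : Matrix (Fin m) (Fin d) ℝ) (W : Matrix (Fin m) (Fin m) ℝ)
    (hQs : Qm.IsSymm) (hKs : Km.IsSymm) (hFs : Fm.IsSymm) (hRs : Rm.IsSymm)
    (hWis : (W⁻¹).IsSymm) (hPs : Pm.IsSymm) (hPis : (Pm⁻¹).IsSymm) (hPP : Pm * Pm⁻¹ = 1)
    (Mb : Matrix (Fin d ⊕ Fin d) (Fin d ⊕ Fin d) ℝ) (hMs : Mb.IsSymm)
    (fvv : (Fin d ⊕ Fin d) → ℝ)
    (mc ma ρ fb av rv : Fin d → ℝ) (τ : Fin m → ℝ)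
    (Θm : Matrix (Fin d) (Fin d) ℝ) (hΘ : Θm = Rm * Hmᵀ * W⁻¹ * Hm)
    (𝒯m : Matrix (Fin d) (Fin m) ℝ) (h𝒯 : 𝒯m = Rm * Hmᵀ * W⁻¹)
    (Λm : Matrix (Fin d) (Fin d) ℝ) (hΛ : Λm = Rm * Hmᵀ * W⁻¹ * Hm * Rm)
    (calPm calRm calQm : Matrix (Fin d ⊕ Fin d) (Fin d ⊕ Fin d) ℝ)
    (hcalP : calPm = Matrix.fromBlocks Am (-(Km * Fm)) 0 (Am - Km * Fm))
    (hcalR : calRm = Matrix.fromBlocks Pm⁻¹ 0 0 Λm)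
    (hcalQ : calQm = Matrix.fromBlocks ((-(2 * lam)) • Qm) 0 0 ((-(2 * lam)) • (Fm * Km * Fm)))
    (αv ℓvv : (Fin d ⊕ Fin d) → ℝ)
    (hα : αv = Sum.elim (av - (1 / 2 : ℝ) • (Km *ᵥ fb)) (av - (1 / 2 : ℝ) • (Km *ᵥ fb)))
    (hℓ : ℓvv = Sum.elim ((2 * lam) • (Qm *ᵥ rv)) (-(lam • ((Fm * Km) *ᵥ fb))))
    (Dmc Dma : Fin d → ℝ)
    (hDmc : Dmc = Am *ᵥ mc - (Km * Fm) *ᵥ ma + av - (1 / 2 : ℝ) • (Km *ᵥ fb) + ρ)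
    (hDma : Dma = Θm *ᵥ mc + (Am - Km * Fm - Θm) *ᵥ ma + 𝒯m *ᵥ τ + av - (1 / 2 : ℝ) • (Km *ᵥ fb))
    (DM : Matrix (Fin d ⊕ Fin d) (Fin d ⊕ Fin d) ℝ)
    (hDM : DM = -(calPmᵀ * Mb + Mb * calPm - Mb * calRm * Mb + calQm))
    (Dfv : (Fin d ⊕ Fin d) → ℝ)
    (hDfv : Dfv = -(calPmᵀ *ᵥ fvv - (Mb * calRm) *ᵥ fvv + Mb *ᵥ αv + ℓvv))
    (yc ya : Fin d → ℝ)
    (hyc : yc = fun i => (Mb *ᵥ Sum.elim mc ma + fvv) (Sum.inl i))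
    (hya : ya = fun i => (Mb *ᵥ Sum.elim mc ma + fvv) (Sum.inr i))
    (u2 : Fin m → ℝ) (hu2 : u2 = τ + Hm *ᵥ (mc - ma))
    (vv : Fin m → ℝ) (hvv : vv = Hm *ᵥ (Rm *ᵥ ya)) :
    (1 / 2 : ℝ) * ((Hm *ᵥ (mc - ma) + τ) ⬝ᵥ (W⁻¹ *ᵥ (Hm *ᵥ (mc - ma) + τ)))
      + (1 / 2 : ℝ) * (ρ ⬝ᵥ (Pm *ᵥ ρ))
      - lam * ((mc - rv) ⬝ᵥ (Qm *ᵥ (mc - rv))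
          + (Fm *ᵥ ma + (1 / 2 : ℝ) • fb) ⬝ᵥ (Km *ᵥ (Fm *ᵥ ma + (1 / 2 : ℝ) • fb)))
    = -((1 / 2 : ℝ) * (Sum.elim Dmc Dma ⬝ᵥ (Mb *ᵥ Sum.elim mc ma)
          + Sum.elim mc ma ⬝ᵥ (DM *ᵥ Sum.elim mc ma + Mb *ᵥ Sum.elim Dmc Dma))
        + (Dfv ⬝ᵥ Sum.elim mc ma + fvv ⬝ᵥ Sum.elim Dmc Dma))
      + (-(lam * (rv ⬝ᵥ (Qm *ᵥ rv))) - (lam / 4) * (fb ⬝ᵥ (Km *ᵥ fb))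
          + αv ⬝ᵥ fvv - (1 / 2 : ℝ) * (fvv ⬝ᵥ (calRm *ᵥ fvv)))
      + ((1 / 2 : ℝ) * ((ρ + Pm⁻¹ *ᵥ yc) ⬝ᵥ (Pm *ᵥ (ρ + Pm⁻¹ *ᵥ yc)))
        + (1 / 2 : ℝ) * ((u2 + vv) ⬝ᵥ (W⁻¹ *ᵥ (u2 + vv)))) := by
  have hΛs : Λm.IsSymm := by
    rw [Matrix.IsSymm, hΛ]
    simp only [Matrix.transpose_mul, Matrix.transpose_transpose, hRs.eq, hWis.eq]
    simp only [Matrix.mul_assoc]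
  have hcalRs : calRm.IsSymm := by
    rw [Matrix.IsSymm, hcalR, Matrix.fromBlocks_transpose, hPis.eq, hΛs.eq]
    simp
  have h𝒯H : 𝒯m * Hm = Θm := by rw [h𝒯, hΘ]
  set X : Fin d ⊕ Fin d → ℝ := Sum.elim mc ma with hXdef
  set e : Fin d ⊕ Fin d → ℝ := Sum.elim ρ (𝒯m *ᵥ u2) with hedef
  -- step A : dynamics in block form
  have h1 : Dmc = Am *ᵥ mc + (-(Km * Fm)) *ᵥ ma + (av - (1 / 2 : ℝ) • (Km *ᵥ fb)) + ρ := by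
    rw [hDmc, Matrix.neg_mulVec]; abel
  have h2 : Dma = (0 : Matrix (Fin d) (Fin d) ℝ) *ᵥ mc + (Am - Km * Fm) *ᵥ ma
      + (av - (1 / 2 : ℝ) • (Km *ᵥ fb)) + 𝒯m *ᵥ u2 := by
    rw [hDma, hu2, Matrix.mulVec_add, Matrix.mulVec_mulVec, h𝒯H, Matrix.mulVec_sub,
      Matrix.sub_mulVec, Matrix.sub_mulVec, Matrix.zero_mulVec]
    abel
  have hDX : Sum.elim Dmc Dma = calPm *ᵥ X + αv + e := by
    rw [hXdef, hedef, hcalP, hα, Matrix.fromBlocks_mulVec, sum_elim_add, sum_elim_add]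
    simp only [Sum.elim_comp_inl, Sum.elim_comp_inr]
    funext i
    cases i with
    | inl i => simp only [Sum.elim_inl]; rw [h1]
    | inr i => simp only [Sum.elim_inr]; rw [h2]
  have hB := Bgen calPm calRm calQm Mb hMs hcalRs X (Sum.elim Dmc Dma) fvv αv ℓvv e hDX DM hDM
    Dfv hDfv
  rw [hB]
  -- block expansions
  have hyE : Mb *ᵥ X + fvv = Sum.elim yc ya := by
    funext i
    cases i with
    | inl i => simp only [Sum.elim_inl, hyc]
    | inr i => simp only [Sum.elim_inr, hya]
  have h𝒯T : 𝒯mᵀ *ᵥ ya = W⁻¹ *ᵥ (Hm *ᵥ (Rm *ᵥ ya)) := by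
    rw [h𝒯, Matrix.transpose_mul, Matrix.transpose_mul, Matrix.transpose_transpose,
      hWis.eq, hRs.eq]
    simp only [← Matrix.mulVec_mulVec]
  have hC1 : e ⬝ᵥ (Mb *ᵥ X + fvv) = ρ ⬝ᵥ yc + u2 ⬝ᵥ (W⁻¹ *ᵥ vv) := by
    rw [hyE, hedef, sumElim_dotProduct_sumElim, trans_dot 𝒯m u2 ya, h𝒯T, hvv]
  have hC2 : (Mb *ᵥ X + fvv) ⬝ᵥ (calRm *ᵥ (Mb *ᵥ X + fvv))
      = yc ⬝ᵥ (Pm⁻¹ *ᵥ yc) + vv ⬝ᵥ (W⁻¹ *ᵥ vv) := by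
    have hblk : calRm *ᵥ Sum.elim yc ya = Sum.elim (Pm⁻¹ *ᵥ yc) (Λm *ᵥ ya) := by
      rw [hcalR]; simp [Matrix.fromBlocks_mulVec]
    rw [hyE, hblk, sumElim_dotProduct_sumElim]
    congr 1
    rw [hΛ]
    simp only [← Matrix.mulVec_mulVec]
    rw [dot_swap Rm hRs ya (Hmᵀ *ᵥ (W⁻¹ *ᵥ (Hm *ᵥ (Rm *ᵥ ya)))),
      dotProduct_comm (Hmᵀ *ᵥ (W⁻¹ *ᵥ (Hm *ᵥ (Rm *ᵥ ya)))) (Rm *ᵥ ya),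
      dot_trans Hm (Rm *ᵥ ya) (W⁻¹ *ᵥ (Hm *ᵥ (Rm *ᵥ ya))), ← hvv,
      dotProduct_comm vv (W⁻¹ *ᵥ vv)]
  have hC3 : X ⬝ᵥ (calQm *ᵥ X)
      = -(2 * lam) * (mc ⬝ᵥ (Qm *ᵥ mc)) + -(2 * lam) * (ma ⬝ᵥ (Fm *ᵥ (Km *ᵥ (Fm *ᵥ ma)))) := by
    have hblk : calQm *ᵥ X = Sum.elim ((-(2 * lam)) • (Qm *ᵥ mc))
        ((-(2 * lam)) • (Fm *ᵥ (Km *ᵥ (Fm *ᵥ ma)))) := by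
      rw [hcalQ, hXdef]
      funext i
      cases i <;>
        simp [Matrix.fromBlocks_mulVec, Matrix.smul_mulVec, Matrix.neg_mulVec,
          Sum.elim_comp_inl, Sum.elim_comp_inr, ← Matrix.mulVec_mulVec]
    rw [hblk, hXdef, sumElim_dotProduct_sumElim, dotProduct_smul,
      dotProduct_smul, smul_eq_mul, smul_eq_mul]
  have hC4 : ℓvv ⬝ᵥ X = 2 * lam * (mc ⬝ᵥ (Qm *ᵥ rv)) - lam * (ma ⬝ᵥ (Fm *ᵥ (Km *ᵥ fb))) := by
    rw [hℓ, hXdef, sumElim_dotProduct_sumElim, smul_dotProduct,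
      neg_dotProduct, smul_dotProduct, smul_eq_mul, smul_eq_mul,
      dotProduct_comm (Qm *ᵥ rv) mc, dotProduct_comm ((Fm * Km) *ᵥ fb) ma]
    simp only [← Matrix.mulVec_mulVec]
    ring
  have hD1 : Hm *ᵥ (mc - ma) + τ = u2 := by rw [hu2]; exact add_comm _ _
  have hD2 : (mc - rv) ⬝ᵥ (Qm *ᵥ (mc - rv))
      = mc ⬝ᵥ (Qm *ᵥ mc) - 2 * (mc ⬝ᵥ (Qm *ᵥ rv)) + rv ⬝ᵥ (Qm *ᵥ rv) := by
    rw [Matrix.mulVec_sub, dotProduct_sub, sub_dotProduct,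
      sub_dotProduct, dot_swap Qm hQs rv mc]
    ring
  have hD3 : (Fm *ᵥ ma + (1 / 2 : ℝ) • fb) ⬝ᵥ (Km *ᵥ (Fm *ᵥ ma + (1 / 2 : ℝ) • fb))
      = ma ⬝ᵥ (Fm *ᵥ (Km *ᵥ (Fm *ᵥ ma))) + ma ⬝ᵥ (Fm *ᵥ (Km *ᵥ fb))
        + (1 / 4) * (fb ⬝ᵥ (Km *ᵥ fb)) := by
    rw [sq_exp Km hKs (Fm *ᵥ ma) ((1 / 2 : ℝ) • fb), Matrix.mulVec_smul,
      dotProduct_smul, smul_dotProduct, dotProduct_smul,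
      trans_dot Fm ma (Km *ᵥ (Fm *ᵥ ma)), trans_dot Fm ma (Km *ᵥ fb), hFs.eq,
      smul_eq_mul, smul_eq_mul, smul_eq_mul]
    ring
  rw [hC1, hC2, hC3, hC4, hD1, hD2, hD3, sq_expP Pm hPP hPs hPis ρ yc,
    sq_exp (W⁻¹) hWis u2 vv]
  ring

/-- optimality of the deterministic stealthy attack.
Given the deterministic reduced linear-quadratic attack-design problem (states `(m^c, m^a)`,
controls `(ρ, τ)`, cost `𝒥`), a symmetric solution `M` of the block Riccati terminal value
problem and a solution `𝐟` of the associated linear backward equation, the feedback controls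
`ρ*_t = −P_t⁻¹ y^c_t`, `τ*_t = −H_t R_t y^a_t − H_t (m^{c*}_t − m^{a*}_t)` with
`(y^c, y^a) = M (m^{c*}, m^{a*}) + 𝐟` are continuous and minimize `𝒥` over all continuous
open-loop controls. -/
theorem deterministic_attack_optimal
    (d m : ℕ) (hd : 0 < d) (hm : 0 < m) (T : ℝ) (hT : 0 < T)
    (x₀ : Fin d → ℝ) (lam : ℝ) (hlam : 0 ≤ lam)
    (A : ℝ → Matrix (Fin d) (Fin d) ℝ) (H : ℝ → Matrix (Fin m) (Fin d) ℝ)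
    (R Q K F P : ℝ → Matrix (Fin d) (Fin d) ℝ) (fb a r : ℝ → Fin d → ℝ)
    (hAc : ContinuousOn A (Set.Icc 0 T)) (hHc : ContinuousOn H (Set.Icc 0 T))
    (hRc : ContinuousOn R (Set.Icc 0 T)) (hQc : ContinuousOn Q (Set.Icc 0 T))
    (hKc : ContinuousOn K (Set.Icc 0 T)) (hFc : ContinuousOn F (Set.Icc 0 T))
    (hPc : ContinuousOn P (Set.Icc 0 T))
    (hfbc : ContinuousOn fb (Set.Icc 0 T)) (hac : ContinuousOn a (Set.Icc 0 T))
    (hrc : ContinuousOn r (Set.Icc 0 T))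
    (hRsymm : ∀ t ∈ Set.Icc (0 : ℝ) T, (R t).IsSymm)
    (hQpsd : ∀ t ∈ Set.Icc (0 : ℝ) T, (Q t).PosSemidef)
    (hKpsd : ∀ t ∈ Set.Icc (0 : ℝ) T, (K t).PosSemidef)
    (hFsymm : ∀ t ∈ Set.Icc (0 : ℝ) T, (F t).IsSymm)
    (hPpd : ∀ t ∈ Set.Icc (0 : ℝ) T, (P t).PosDef)
    (W : Matrix (Fin m) (Fin m) ℝ) (hWsymm : W.IsSymm) (hW : W.PosDef)
    (Θ : ℝ → Matrix (Fin d) (Fin d) ℝ)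
    (hΘ : Θ = fun t => R t * (H t)ᵀ * W⁻¹ * H t)
    (𝒯 : ℝ → Matrix (Fin d) (Fin m) ℝ)
    (h𝒯 : 𝒯 = fun t => R t * (H t)ᵀ * W⁻¹)
    (Λ : ℝ → Matrix (Fin d) (Fin d) ℝ)
    (hΛ : Λ = fun t => R t * (H t)ᵀ * W⁻¹ * H t * R t)
    (calP calR calQ : ℝ → Matrix (Fin d ⊕ Fin d) (Fin d ⊕ Fin d) ℝ)
    (hcalP : calP = fun t => Matrix.fromBlocks (A t) (-(K t * F t)) 0 (A t - K t * F t))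
    (hcalR : calR = fun t => Matrix.fromBlocks (P t)⁻¹ 0 0 (Λ t))
    (hcalQ : calQ = fun t =>
      Matrix.fromBlocks ((-(2 * lam)) • Q t) 0 0 ((-(2 * lam)) • (F t * K t * F t)))
    (α ℓv : ℝ → Fin d ⊕ Fin d → ℝ)
    (hα : α = fun t => Sum.elim (a t - (1 / 2 : ℝ) • (K t *ᵥ fb t))
      (a t - (1 / 2 : ℝ) • (K t *ᵥ fb t)))
    (hℓv : ℓv = fun t => Sum.elim ((2 * lam) • (Q t *ᵥ r t))
      (-(lam • ((F t * K t) *ᵥ fb t))))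
    (M : ℝ → Matrix (Fin d ⊕ Fin d) (Fin d ⊕ Fin d) ℝ)
    (hMsymm : ∀ t ∈ Set.Icc (0 : ℝ) T, (M t).IsSymm)
    (hM : ∀ t ∈ Set.Icc (0 : ℝ) T, HasDerivWithinAt M
      (-((calP t)ᵀ * M t + M t * calP t - M t * calR t * M t + calQ t)) (Set.Icc 0 T) t)
    (hMT : M T = 0)
    (fv : ℝ → Fin d ⊕ Fin d → ℝ)
    (hfv : ∀ t ∈ Set.Icc (0 : ℝ) T, HasDerivWithinAt fv
      (-((calP t)ᵀ *ᵥ fv t - (M t * calR t) *ᵥ fv t + M t *ᵥ α t + ℓv t)) (Set.Icc 0 T) t)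
    (hfvT : fv T = 0)
    (mcs mas : ℝ → Fin d → ℝ)
    (ycs yas : ℝ → Fin d → ℝ)
    (hycs : ycs = fun t i => (M t *ᵥ Sum.elim (mcs t) (mas t) + fv t) (Sum.inl i))
    (hyas : yas = fun t i => (M t *ᵥ Sum.elim (mcs t) (mas t) + fv t) (Sum.inr i))
    (ρstar : ℝ → Fin d → ℝ) (hρstar : ρstar = fun t => -((P t)⁻¹ *ᵥ ycs t))
    (τstar : ℝ → Fin m → ℝ)
    (hτstar : τstar = fun t => -(H t *ᵥ (R t *ᵥ yas t)) - H t *ᵥ (mcs t - mas t))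
    (hmcs : ∀ t ∈ Set.Icc (0 : ℝ) T, HasDerivWithinAt mcs
      (A t *ᵥ mcs t - (K t * F t) *ᵥ mas t + a t - (1 / 2 : ℝ) • (K t *ᵥ fb t) + ρstar t)
      (Set.Icc 0 T) t)
    (hmas : ∀ t ∈ Set.Icc (0 : ℝ) T, HasDerivWithinAt mas
      (Θ t *ᵥ mcs t + (A t - K t * F t - Θ t) *ᵥ mas t + 𝒯 t *ᵥ τstar t
        + a t - (1 / 2 : ℝ) • (K t *ᵥ fb t))
      (Set.Icc 0 T) t)
    (hmcs0 : mcs 0 = x₀) (hmas0 : mas 0 = x₀)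
    (J : (ℝ → Fin d → ℝ) → (ℝ → Fin m → ℝ) → (ℝ → Fin d → ℝ) → (ℝ → Fin d → ℝ) → ℝ)
    (hJ : J = fun ρ τ mc ma => ∫ t in (0 : ℝ)..T,
      ((1 / 2 : ℝ) * ((H t *ᵥ (mc t - ma t) + τ t) ⬝ᵥ (W⁻¹ *ᵥ (H t *ᵥ (mc t - ma t) + τ t)))
        + (1 / 2 : ℝ) * (ρ t ⬝ᵥ (P t *ᵥ ρ t))
        - lam * ((mc t - r t) ⬝ᵥ (Q t *ᵥ (mc t - r t))
            + (F t *ᵥ ma t + (1 / 2 : ℝ) • fb t) ⬝ᵥ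
                (K t *ᵥ (F t *ᵥ ma t + (1 / 2 : ℝ) • fb t))))) :
    ContinuousOn ρstar (Set.Icc 0 T) ∧ ContinuousOn τstar (Set.Icc 0 T) ∧
    ∀ (ρ : ℝ → Fin d → ℝ) (τ : ℝ → Fin m → ℝ) (mc ma : ℝ → Fin d → ℝ),
      ContinuousOn ρ (Set.Icc 0 T) → ContinuousOn τ (Set.Icc 0 T) →
      (∀ t ∈ Set.Icc (0 : ℝ) T, HasDerivWithinAt mc
        (A t *ᵥ mc t - (K t * F t) *ᵥ ma t + a t - (1 / 2 : ℝ) • (K t *ᵥ fb t) + ρ t)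
        (Set.Icc 0 T) t) →
      (∀ t ∈ Set.Icc (0 : ℝ) T, HasDerivWithinAt ma
        (Θ t *ᵥ mc t + (A t - K t * F t - Θ t) *ᵥ ma t + 𝒯 t *ᵥ τ t
          + a t - (1 / 2 : ℝ) • (K t *ᵥ fb t))
        (Set.Icc 0 T) t) →
      mc 0 = x₀ → ma 0 = x₀ →
      J ρstar τstar mcs mas ≤ J ρ τ mc ma := by
  have hT0 : (0:ℝ) ≤ T := hT.le
  -- symmetry facts
  have hWis : (W⁻¹).IsSymm := by
    rw [Matrix.IsSymm, Matrix.transpose_nonsing_inv, hWsymm.eq]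
  have hWipd : (W⁻¹).PosDef := hW.inv
  have hPsym : ∀ t ∈ Set.Icc (0:ℝ) T, (P t).IsSymm := fun t ht => herm_symm _ (hPpd t ht).1
  have hPis : ∀ t ∈ Set.Icc (0:ℝ) T, ((P t)⁻¹).IsSymm := by
    intro t ht
    rw [Matrix.IsSymm, Matrix.transpose_nonsing_inv, (hPsym t ht).eq]
  have hPP : ∀ t ∈ Set.Icc (0:ℝ) T, P t * (P t)⁻¹ = 1 :=
    fun t ht => Matrix.mul_nonsing_inv _ (hPpd t ht).det_pos.ne'.isUnit
  -- continuity facts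
  have hMc : ContinuousOn M (Set.Icc 0 T) := fun t ht => (hM t ht).continuousWithinAt
  have hfvC : ContinuousOn fv (Set.Icc 0 T) := fun t ht => (hfv t ht).continuousWithinAt
  have hmcsC : ContinuousOn mcs (Set.Icc 0 T) := fun t ht => (hmcs t ht).continuousWithinAt
  have hmasC : ContinuousOn mas (Set.Icc 0 T) := fun t ht => (hmas t ht).continuousWithinAt
  have hPinvC : ContinuousOn (fun t => (P t)⁻¹) (Set.Icc 0 T) := con_inv hPc hPpd
  have hKFc : ContinuousOn (fun t => K t * F t) (Set.Icc 0 T) := con_matmul hKc hFc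
  have hΘc : ContinuousOn Θ (Set.Icc 0 T) := by
    rw [hΘ]
    exact con_matmul (con_matmul (con_matmul hRc (con_transpose hHc)) continuousOn_const) hHc
  have h𝒯c : ContinuousOn 𝒯 (Set.Icc 0 T) := by
    rw [h𝒯]; exact con_matmul (con_matmul hRc (con_transpose hHc)) continuousOn_const
  have hΛc : ContinuousOn Λ (Set.Icc 0 T) := by
    rw [hΛ]
    exact con_matmul (con_matmul (con_matmul (con_matmul hRc (con_transpose hHc))
      continuousOn_const) hHc) hRc
  have hcalPC : ContinuousOn calP (Set.Icc 0 T) := by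
    rw [hcalP]
    exact con_fromBlocks hAc ((con_matmul hKc hFc).neg) continuousOn_const
      (hAc.sub (con_matmul hKc hFc))
  have hcalRC : ContinuousOn calR (Set.Icc 0 T) := by
    rw [hcalR]
    exact con_fromBlocks hPinvC continuousOn_const continuousOn_const hΛc
  have hcalQC : ContinuousOn calQ (Set.Icc 0 T) := by
    rw [hcalQ]
    exact con_fromBlocks (hQc.fun_const_smul _) continuousOn_const continuousOn_const
      ((con_matmul (con_matmul hFc hKc) hFc).fun_const_smul _)
  have hαC : ContinuousOn α (Set.Icc 0 T) := by
    rw [hα]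
    exact con_sumElim (hac.sub ((con_mulVec hKc hfbc).fun_const_smul _))
      (hac.sub ((con_mulVec hKc hfbc).fun_const_smul _))
  have hℓC : ContinuousOn ℓv (Set.Icc 0 T) := by
    rw [hℓv]
    exact con_sumElim ((con_mulVec hQc hrc).fun_const_smul _)
      (((con_mulVec (con_matmul hFc hKc) hfbc).fun_const_smul lam).neg)
  -- continuity of the optimal feedback
  have hycsC : ContinuousOn ycs (Set.Icc 0 T) := by
    rw [hycs]
    exact continuousOn_pi.2 fun i =>
      con_apply ((con_mulVec hMc (con_sumElim hmcsC hmasC)).add hfvC) _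
  have hyasC : ContinuousOn yas (Set.Icc 0 T) := by
    rw [hyas]
    exact continuousOn_pi.2 fun i =>
      con_apply ((con_mulVec hMc (con_sumElim hmcsC hmasC)).add hfvC) _
  have hρstarC : ContinuousOn ρstar (Set.Icc 0 T) := by
    rw [hρstar]; exact (con_mulVec hPinvC hycsC).neg
  have hτstarC : ContinuousOn τstar (Set.Icc 0 T) := by
    rw [hτstar]
    exact ((con_mulVec hHc (con_mulVec hRc hyasC)).neg).sub
      (con_mulVec hHc (hmcsC.sub hmasC))
  -- value function pieces
  set yCf : (ℝ → Fin d → ℝ) → (ℝ → Fin d → ℝ) → ℝ → Fin d → ℝ :=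
    fun mc ma t => fun i => (M t *ᵥ Sum.elim (mc t) (ma t) + fv t) (Sum.inl i) with hyCf
  set yAf : (ℝ → Fin d → ℝ) → (ℝ → Fin d → ℝ) → ℝ → Fin d → ℝ :=
    fun mc ma t => fun i => (M t *ᵥ Sum.elim (mc t) (ma t) + fv t) (Sum.inr i) with hyAf
  set Sqf : (ℝ → Fin d → ℝ) → (ℝ → Fin m → ℝ) → (ℝ → Fin d → ℝ) → (ℝ → Fin d → ℝ) → ℝ → ℝ :=
    fun ρ' τ' mc ma t =>
      (1 / 2 : ℝ) * ((ρ' t + (P t)⁻¹ *ᵥ yCf mc ma t) ⬝ᵥ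
          (P t *ᵥ (ρ' t + (P t)⁻¹ *ᵥ yCf mc ma t)))
      + (1 / 2 : ℝ) * (((τ' t + H t *ᵥ (mc t - ma t)) + H t *ᵥ (R t *ᵥ yAf mc ma t)) ⬝ᵥ
          (W⁻¹ *ᵥ ((τ' t + H t *ᵥ (mc t - ma t)) + H t *ᵥ (R t *ᵥ yAf mc ma t)))) with hSqf
  set γf : ℝ → ℝ := fun t =>
    -(lam * (r t ⬝ᵥ (Q t *ᵥ r t))) - lam / 4 * (fb t ⬝ᵥ (K t *ᵥ fb t)) + α t ⬝ᵥ fv t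
      - (1 / 2 : ℝ) * (fv t ⬝ᵥ (calR t *ᵥ fv t)) with hγf
  set Φz : ℝ := (1 / 2 : ℝ) * (Sum.elim x₀ x₀ ⬝ᵥ (M 0 *ᵥ Sum.elim x₀ x₀))
    + fv 0 ⬝ᵥ Sum.elim x₀ x₀ with hΦzdef
  have hγC : ContinuousOn γf (Set.Icc 0 T) := by
    rw [hγf]
    exact (((continuousOn_const.mul (con_dot hrc (con_mulVec hQc hrc))).neg.sub
      (continuousOn_const.mul (con_dot hfbc (con_mulVec hKc hfbc)))).add
      (con_dot hαC hfvC)).sub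
      (continuousOn_const.mul (con_dot hfvC (con_mulVec hcalRC hfvC)))
  have hSqC : ∀ (ρ' : ℝ → Fin d → ℝ) (τ' : ℝ → Fin m → ℝ) (mc ma : ℝ → Fin d → ℝ),
      ContinuousOn ρ' (Set.Icc 0 T) → ContinuousOn τ' (Set.Icc 0 T) →
      ContinuousOn mc (Set.Icc 0 T) → ContinuousOn ma (Set.Icc 0 T) →
      ContinuousOn (Sqf ρ' τ' mc ma) (Set.Icc 0 T) := by
    intro ρ' τ' mc ma h1 h2 h3 h4
    have hyC : ContinuousOn (yCf mc ma) (Set.Icc 0 T) := by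
      simp only [hyCf]
      exact continuousOn_pi.2 fun i =>
        con_apply ((con_mulVec hMc (con_sumElim h3 h4)).add hfvC) _
    have hyA : ContinuousOn (yAf mc ma) (Set.Icc 0 T) := by
      simp only [hyAf]
      exact continuousOn_pi.2 fun i =>
        con_apply ((con_mulVec hMc (con_sumElim h3 h4)).add hfvC) _
    simp only [hSqf]
    have c1 : ContinuousOn (fun t => ρ' t + (P t)⁻¹ *ᵥ yCf mc ma t) (Set.Icc 0 T) :=
      h1.add (con_mulVec hPinvC hyC)
    have c2 : ContinuousOn
        (fun t => (τ' t + H t *ᵥ (mc t - ma t)) + H t *ᵥ (R t *ᵥ yAf mc ma t))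
        (Set.Icc 0 T) :=
      (h2.add (con_mulVec hHc (h3.sub h4))).add (con_mulVec hHc (con_mulVec hRc hyA))
    exact (continuousOn_const.mul (con_dot c1 (con_mulVec hPc c1))).add
      (continuousOn_const.mul (con_dot c2 (con_mulVec continuousOn_const c2)))
  -- the key representation of the cost
  have key : ∀ (ρ' : ℝ → Fin d → ℝ) (τ' : ℝ → Fin m → ℝ) (mc ma : ℝ → Fin d → ℝ),
      ContinuousOn ρ' (Set.Icc 0 T) → ContinuousOn τ' (Set.Icc 0 T) →
      (∀ t ∈ Set.Icc (0 : ℝ) T, HasDerivWithinAt mc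
        (A t *ᵥ mc t - (K t * F t) *ᵥ ma t + a t - (1 / 2 : ℝ) • (K t *ᵥ fb t) + ρ' t)
        (Set.Icc 0 T) t) →
      (∀ t ∈ Set.Icc (0 : ℝ) T, HasDerivWithinAt ma
        (Θ t *ᵥ mc t + (A t - K t * F t - Θ t) *ᵥ ma t + 𝒯 t *ᵥ τ' t
          + a t - (1 / 2 : ℝ) • (K t *ᵥ fb t))
        (Set.Icc 0 T) t) →
      mc 0 = x₀ → ma 0 = x₀ →
      J ρ' τ' mc ma = Φz + ∫ t in (0:ℝ)..T, (γf t + Sqf ρ' τ' mc ma t) := by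
    intro ρ' τ' mc ma hρ'c hτ'c hdc hda h0c h0a
    have hmcC : ContinuousOn mc (Set.Icc 0 T) := fun t ht => (hdc t ht).continuousWithinAt
    have hmaC : ContinuousOn ma (Set.Icc 0 T) := fun t ht => (hda t ht).continuousWithinAt
    set Dc : ℝ → Fin d → ℝ := fun u =>
      A u *ᵥ mc u - (K u * F u) *ᵥ ma u + a u - (1 / 2 : ℝ) • (K u *ᵥ fb u) + ρ' u with hDc
    set Da : ℝ → Fin d → ℝ := fun u =>
      Θ u *ᵥ mc u + (A u - K u * F u - Θ u) *ᵥ ma u + 𝒯 u *ᵥ τ' u + a u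
        - (1 / 2 : ℝ) • (K u *ᵥ fb u) with hDa
    have hdc' : ∀ t ∈ Set.Icc (0:ℝ) T, HasDerivWithinAt mc (Dc t) (Set.Icc 0 T) t := by
      simp only [hDc]; exact hdc
    have hda' : ∀ t ∈ Set.Icc (0:ℝ) T, HasDerivWithinAt ma (Da t) (Set.Icc 0 T) t := by
      simp only [hDa]; exact hda
    set DMf : ℝ → Matrix (Fin d ⊕ Fin d) (Fin d ⊕ Fin d) ℝ := fun u =>
      -((calP u)ᵀ * M u + M u * calP u - M u * calR u * M u + calQ u) with hDMd
    have hM' : ∀ t ∈ Set.Icc (0:ℝ) T, HasDerivWithinAt M (DMf t) (Set.Icc 0 T) t := by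
      simp only [hDMd]; exact hM
    set Dfvf : ℝ → (Fin d ⊕ Fin d) → ℝ := fun u =>
      -((calP u)ᵀ *ᵥ fv u - (M u * calR u) *ᵥ fv u + M u *ᵥ α u + ℓv u) with hDfvd
    have hfv' : ∀ t ∈ Set.Icc (0:ℝ) T, HasDerivWithinAt fv (Dfvf t) (Set.Icc 0 T) t := by
      simp only [hDfvd]; exact hfv
    set Φf : ℝ → ℝ := fun u =>
      (1 / 2 : ℝ) * (Sum.elim (mc u) (ma u) ⬝ᵥ (M u *ᵥ Sum.elim (mc u) (ma u)))
        + fv u ⬝ᵥ Sum.elim (mc u) (ma u) with hΦf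
    set DP : ℝ → ℝ := fun u =>
      (1 / 2 : ℝ) * (Sum.elim (Dc u) (Da u) ⬝ᵥ (M u *ᵥ Sum.elim (mc u) (ma u))
          + Sum.elim (mc u) (ma u) ⬝ᵥ (DMf u *ᵥ Sum.elim (mc u) (ma u)
            + M u *ᵥ Sum.elim (Dc u) (Da u)))
        + (Dfvf u ⬝ᵥ Sum.elim (mc u) (ma u) + fv u ⬝ᵥ Sum.elim (Dc u) (Da u)) with hDPd
    have hΦd : ∀ t ∈ Set.Icc (0:ℝ) T, HasDerivWithinAt Φf (DP t) (Set.Icc 0 T) t := by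
      intro t ht
      have hX : HasDerivWithinAt (fun u => Sum.elim (mc u) (ma u))
          (Sum.elim (Dc t) (Da t)) (Set.Icc 0 T) t := hdw_sumElim (hdc' t ht) (hda' t ht)
      have h1 := (hdw_dot hX (hdw_mulVec (hM' t ht) hX)).const_mul (1 / 2 : ℝ)
      have h2 := hdw_dot (hfv' t ht) hX
      simp only [hΦf, hDPd]
      exact h1.add h2
    have hΦcont : ContinuousOn Φf (Set.Icc 0 T) := fun t ht => (hΦd t ht).continuousWithinAt
    have hDcC : ContinuousOn Dc (Set.Icc 0 T) := by
      simp only [hDc]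
      exact ((((con_mulVec hAc hmcC).sub (con_mulVec hKFc hmaC)).add hac).sub
        ((con_mulVec hKc hfbc).fun_const_smul _)).add hρ'c
    have hDaC : ContinuousOn Da (Set.Icc 0 T) := by
      simp only [hDa]
      exact ((((con_mulVec hΘc hmcC).add
        (con_mulVec ((hAc.sub hKFc).sub hΘc) hmaC)).add
        (con_mulVec h𝒯c hτ'c)).add hac).sub ((con_mulVec hKc hfbc).fun_const_smul _)
    have hDMC : ContinuousOn DMf (Set.Icc 0 T) := by
      simp only [hDMd]
      exact ((((con_matmul (con_transpose hcalPC) hMc).add (con_matmul hMc hcalPC)).sub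
        (con_matmul (con_matmul hMc hcalRC) hMc)).add hcalQC).neg
    have hDfvC : ContinuousOn Dfvf (Set.Icc 0 T) := by
      simp only [hDfvd]
      exact ((((con_mulVec (con_transpose hcalPC) hfvC).sub
        (con_mulVec (con_matmul hMc hcalRC) hfvC)).add
        (con_mulVec hMc hαC)).add hℓC).neg
    have hDPC : ContinuousOn DP (Set.Icc 0 T) := by
      simp only [hDPd]
      exact (continuousOn_const.mul ((con_dot (con_sumElim hDcC hDaC)
          (con_mulVec hMc (con_sumElim hmcC hmaC))).add
          (con_dot (con_sumElim hmcC hmaC)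
            ((con_mulVec hDMC (con_sumElim hmcC hmaC)).add
              (con_mulVec hMc (con_sumElim hDcC hDaC)))))).add
        ((con_dot hDfvC (con_sumElim hmcC hmaC)).add
          (con_dot hfvC (con_sumElim hDcC hDaC)))
    have hEq : ∀ t ∈ Set.Icc (0:ℝ) T,
        ((1 / 2 : ℝ) * ((H t *ᵥ (mc t - ma t) + τ' t) ⬝ᵥ
            (W⁻¹ *ᵥ (H t *ᵥ (mc t - ma t) + τ' t)))
          + (1 / 2 : ℝ) * (ρ' t ⬝ᵥ (P t *ᵥ ρ' t))
          - lam * ((mc t - r t) ⬝ᵥ (Q t *ᵥ (mc t - r t))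
              + (F t *ᵥ ma t + (1 / 2 : ℝ) • fb t) ⬝ᵥ
                  (K t *ᵥ (F t *ᵥ ma t + (1 / 2 : ℝ) • fb t))))
        = -DP t + (γf t + Sqf ρ' τ' mc ma t) := by
      intro t ht
      have hpw := pointwise_key d m lam (A t) (Q t) (K t) (F t) (P t) (R t) (H t) W
        (herm_symm _ (hQpsd t ht).1) (herm_symm _ (hKpsd t ht).1) (hFsymm t ht)
        (hRsymm t ht) hWis (hPsym t ht) (hPis t ht) (hPP t ht) (M t) (hMsymm t ht) (fv t)
        (mc t) (ma t) (ρ' t) (fb t) (a t) (r t) (τ' t)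
        (Θ t) (by rw [hΘ]) (𝒯 t) (by rw [h𝒯]) (Λ t) (by rw [hΛ])
        (calP t) (calR t) (calQ t) (by rw [hcalP]) (by rw [hcalR]) (by rw [hcalQ])
        (α t) (ℓv t) (by rw [hα]) (by rw [hℓv])
        (Dc t) (Da t) (by simp only [hDc]) (by simp only [hDa])
        (DMf t) (by simp only [hDMd]) (Dfvf t) (by simp only [hDfvd])
        (yCf mc ma t) (yAf mc ma t) (by simp only [hyCf]) (by simp only [hyAf])
        (τ' t + H t *ᵥ (mc t - ma t)) rfl
        (H t *ᵥ (R t *ᵥ yAf mc ma t)) rfl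
      rw [hpw]
      simp only [hDPd, hγf, hSqf]
      ring
    have hFTC : ∫ t in (0:ℝ)..T, DP t = Φf T - Φf 0 := by
      apply intervalIntegral.integral_eq_sub_of_hasDeriv_right_of_le hT0 hΦcont _
        (con_integrable hT0 hDPC)
      intro t ht'
      exact ((hΦd t ⟨ht'.1.le, ht'.2.le⟩).hasDerivAt
        (Icc_mem_nhds ht'.1 ht'.2)).hasDerivWithinAt
    have hΦT : Φf T = 0 := by
      simp [hΦf, hMT, hfvT, Matrix.zero_mulVec]
    have hΦ0 : Φf 0 = Φz := by
      simp only [hΦf, h0c, h0a, hΦzdef]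
    have hγSqC : ContinuousOn (fun t => γf t + Sqf ρ' τ' mc ma t) (Set.Icc 0 T) :=
      hγC.add (hSqC ρ' τ' mc ma hρ'c hτ'c hmcC hmaC)
    simp only [hJ]
    rw [intervalIntegral.integral_congr
      (g := fun t => -DP t + (γf t + Sqf ρ' τ' mc ma t))
      (fun t ht => hEq t (by rwa [Set.uIcc_of_le hT0] at ht))]
    rw [intervalIntegral.integral_add (con_integrable hT0 hDPC.fun_neg)
      (con_integrable hT0 hγSqC)]
    rw [intervalIntegral.integral_neg, hFTC, hΦT, hΦ0]
    ring
  refine ⟨hρstarC, hτstarC, ?_⟩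
  intro ρ τ mc ma hρc hτc hdmc hdma h0c h0a
  have hmcC : ContinuousOn mc (Set.Icc 0 T) := fun t ht => (hdmc t ht).continuousWithinAt
  have hmaC : ContinuousOn ma (Set.Icc 0 T) := fun t ht => (hdma t ht).continuousWithinAt
  rw [key ρstar τstar mcs mas hρstarC hτstarC hmcs hmas hmcs0 hmas0,
    key ρ τ mc ma hρc hτc hdmc hdma h0c h0a]
  have hSq0 : ∀ t ∈ Set.Icc (0:ℝ) T, Sqf ρstar τstar mcs mas t = 0 := by
    intro t ht
    have e1 : ρstar t + (P t)⁻¹ *ᵥ yCf mcs mas t = 0 := by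
      simp only [hρstar, hycs, hyCf]
      exact neg_add_cancel _
    have e2 : (τstar t + H t *ᵥ (mcs t - mas t)) + H t *ᵥ (R t *ᵥ yAf mcs mas t) = 0 := by
      simp only [hτstar, hyas, hyAf]
      abel
    simp only [hSqf, e1, e2]
    simp
  have hint1 : (∫ t in (0:ℝ)..T, (γf t + Sqf ρstar τstar mcs mas t))
      = ∫ t in (0:ℝ)..T, γf t := by
    apply intervalIntegral.integral_congr
    intro t ht
    rw [Set.uIcc_of_le hT0] at ht
    simp [hSq0 t ht]
  have hint2 : (∫ t in (0:ℝ)..T, (γf t + Sqf ρ τ mc ma t))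
      = (∫ t in (0:ℝ)..T, γf t) + ∫ t in (0:ℝ)..T, Sqf ρ τ mc ma t :=
    intervalIntegral.integral_add (con_integrable hT0 hγC)
      (con_integrable hT0 (hSqC ρ τ mc ma hρc hτc hmcC hmaC))
  have hnn : 0 ≤ ∫ t in (0:ℝ)..T, Sqf ρ τ mc ma t := by
    apply intervalIntegral.integral_nonneg hT0
    intro t ht
    simp only [hSqf]
    apply add_nonneg
    · exact mul_nonneg (by norm_num) (psd_nonneg _ (hPpd t ht).posSemidef _)
    · exact mul_nonneg (by norm_num) (psd_nonneg _ hWipd.posSemidef _)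
  rw [hint1, hint2]
  linarith
end

section
/- Let d be a positive integer, T > 0, and let E ∈ ℝ^{3d×d} be the block matrix Concat(I_d, 0_{d×d}, I_d) (vertical concatenation). Let D : [0,T] → ℝ^{3d×3d}, δ : [0,T] → ℝ^{3d}, P : [0,T] → S^d with each P_t positive definite, Q^φ : [0,T] → S^{3d}, ℓ : [0,T] → ℝ^{3d}, C : [0,T] → ℝ, and Σ^φ : [0,T] → S^{3d}, all continuous. Suppose F^φ : [0,T] → S^{3d}, f^φ : [0,T] → ℝ^{3d}, and c^φ : [0,T] → ℝ are continuously differentiable and satisfy Ḟ^φ_t − F^φ_t E P_t^{-1} Eᵀ F^φ_t + F^φ_t D_t + D_tᵀ F^φ_t + 2 Q^φ_t = 0 with F^φ_T = 0, ḟ^φ_t − F^φ_t E P_t^{-1} Eᵀ f^φ_t + F^φ_t δ_t + D_tᵀ f^φ_t + ℓ_t = 0 with f^φ_T = 0, and ċ^φ_t + (1/2)Tr(Σ^φ_t F^φ_t) − (1/2)(f^φ_t)ᵀ E P_t^{-1} Eᵀ f^φ_t + (f^φ_t)ᵀ δ_t + C_t = 0 with c^φ_T = 0. Define V(t, φ)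 := (1/2) φᵀ F^φ_t φ + φᵀ f^φ_t + c^φ_t for φ ∈ ℝ^{3d}. Then for every (t, φ) ∈ [0,T] × ℝ^{3d}, ∂_t V(t,φ) + (1/2)Tr(Σ^φ_t F^φ_t) + min_{ρ ∈ ℝ^d} [ (D_t φ + δ_t + E ρ)ᵀ (F^φ_t φ + f^φ_t) + φᵀ Q^φ_t φ + ℓ_tᵀ φ + C_t + (1/2) ρᵀ P_t ρ ] = 0, and the minimum over ρ ∈ ℝ^d is attained uniquely at ρ*(t, φ) = −P_t^{-1} Eᵀ (F^φ_t φ + f^φ_t). -/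
open Matrix Set

attribute [local instance] Matrix.normedAddCommGroup Matrix.normedSpace

private lemma dot_shift {n m : Type*} [Fintype n] [Fintype m]
    (A : Matrix n m ℝ) (x : n → ℝ) (y : m → ℝ) :
    x ⬝ᵥ (A *ᵥ y) = (Aᵀ *ᵥ x) ⬝ᵥ y := by
  rw [Matrix.dotProduct_mulVec, Matrix.mulVec_transpose]

private lemma dot_symm2 {n : Type*} [Fintype n] (A : Matrix n n ℝ) (hA : Aᵀ = A)
    (x y : n → ℝ) : x ⬝ᵥ (A *ᵥ y) = y ⬝ᵥ (A *ᵥ x) := by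
  rw [dot_shift, hA, dotProduct_comm]

private lemma hasDerivWithinAt_dotmul {n : Type*} [Fintype n]
    {F : ℝ → Matrix n n ℝ} {F' : Matrix n n ℝ} {s : Set ℝ} {t : ℝ}
    (hF : HasDerivWithinAt F F' s t) (x y : n → ℝ) :
    HasDerivWithinAt (fun u => x ⬝ᵥ (F u *ᵥ y)) (x ⬝ᵥ (F' *ᵥ y)) s t := by
  let L : Matrix n n ℝ →ₗ[ℝ] ℝ :=
    { toFun := fun A => x ⬝ᵥ (A *ᵥ y)
      map_add' := fun A B => by simp [Matrix.add_mulVec]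
      map_smul' := fun c A => by simp [Matrix.smul_mulVec] }
  exact (L.toContinuousLinearMap.hasFDerivAt).comp_hasDerivWithinAt t hF

private lemma hasDerivWithinAt_dotvec {n : Type*} [Fintype n]
    {f : ℝ → n → ℝ} {f' : n → ℝ} {s : Set ℝ} {t : ℝ}
    (hf : HasDerivWithinAt f f' s t) (x : n → ℝ) :
    HasDerivWithinAt (fun u => x ⬝ᵥ f u) (x ⬝ᵥ f') s t := by
  let L : (n → ℝ) →ₗ[ℝ] ℝ :=
    { toFun := fun w => x ⬝ᵥ w
      map_add' := fun a b => by simp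
      map_smul' := fun c a => by simp }
  exact (L.toContinuousLinearMap.hasFDerivAt).comp_hasDerivWithinAt t hf
/-- verification identity for the attacker's HJB equation in the adaptive setting.
With `E = Concat(I_d, 0, I_d)`, if `(F^φ, f^φ, c^φ)` is a continuously differentiable solution
of the stated Riccati/linear/scalar terminal value problems and
`V(t,φ) = ½φᵀF^φ_tφ + φᵀf^φ_t + c^φ_t`, then
`∂ₜV + ½Tr(Σ^φ_t F^φ_t) + min_ρ [ (D_tφ + δ_t + Eρ)ᵀ(F^φ_tφ + f^φ_t) + φᵀQ^φ_tφ + ℓ_tᵀφ + C_t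
+ ½ρᵀP_tρ ] = 0`, with the minimum attained uniquely at `ρ*(t,φ) = −P_t⁻¹Eᵀ(F^φ_tφ + f^φ_t)`. -/
theorem adaptive_attack_hjb_verification
    (d : ℕ) (hd : 0 < d) (T : ℝ) (hT : 0 < T)
    (E : Matrix (Fin d ⊕ (Fin d ⊕ Fin d)) (Fin d) ℝ)
    (hE : E = Matrix.of (Sum.elim (fun k l => if k = l then (1 : ℝ) else 0)
      (Sum.elim (fun _ _ => (0 : ℝ)) (fun k l => if k = l then (1 : ℝ) else 0))))
    (D : ℝ → Matrix (Fin d ⊕ (Fin d ⊕ Fin d)) (Fin d ⊕ (Fin d ⊕ Fin d)) ℝ)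
    (δ : ℝ → (Fin d ⊕ (Fin d ⊕ Fin d)) → ℝ)
    (P : ℝ → Matrix (Fin d) (Fin d) ℝ)
    (Qφ : ℝ → Matrix (Fin d ⊕ (Fin d ⊕ Fin d)) (Fin d ⊕ (Fin d ⊕ Fin d)) ℝ)
    (ℓ : ℝ → (Fin d ⊕ (Fin d ⊕ Fin d)) → ℝ)
    (Cc : ℝ → ℝ)
    (Sφ : ℝ → Matrix (Fin d ⊕ (Fin d ⊕ Fin d)) (Fin d ⊕ (Fin d ⊕ Fin d)) ℝ)
    (hDc : ContinuousOn D (Set.Icc 0 T)) (hδc : ContinuousOn δ (Set.Icc 0 T))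
    (hPc : ContinuousOn P (Set.Icc 0 T)) (hQφc : ContinuousOn Qφ (Set.Icc 0 T))
    (hℓc : ContinuousOn ℓ (Set.Icc 0 T)) (hCc : ContinuousOn Cc (Set.Icc 0 T))
    (hSφc : ContinuousOn Sφ (Set.Icc 0 T))
    (hPpd : ∀ t ∈ Set.Icc (0 : ℝ) T, (P t).PosDef)
    (hQφsymm : ∀ t ∈ Set.Icc (0 : ℝ) T, (Qφ t).IsSymm)
    (hSφsymm : ∀ t ∈ Set.Icc (0 : ℝ) T, (Sφ t).IsSymm)
    (Fφ : ℝ → Matrix (Fin d ⊕ (Fin d ⊕ Fin d)) (Fin d ⊕ (Fin d ⊕ Fin d)) ℝ)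
    (fφ : ℝ → (Fin d ⊕ (Fin d ⊕ Fin d)) → ℝ) (cφ : ℝ → ℝ)
    (hFφsymm : ∀ t ∈ Set.Icc (0 : ℝ) T, (Fφ t).IsSymm)
    (hFφ : ∀ t ∈ Set.Icc (0 : ℝ) T, HasDerivWithinAt Fφ
      (Fφ t * (E * (P t)⁻¹ * Eᵀ) * Fφ t
        - (Fφ t * D t + (D t)ᵀ * Fφ t + (2 : ℝ) • Qφ t)) (Set.Icc 0 T) t)
    (hFφT : Fφ T = 0)
    (hfφ : ∀ t ∈ Set.Icc (0 : ℝ) T, HasDerivWithinAt fφ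
      ((Fφ t * (E * (P t)⁻¹ * Eᵀ)) *ᵥ fφ t
        - (Fφ t *ᵥ δ t + (D t)ᵀ *ᵥ fφ t + ℓ t)) (Set.Icc 0 T) t)
    (hfφT : fφ T = 0)
    (hcφ : ∀ t ∈ Set.Icc (0 : ℝ) T, HasDerivWithinAt cφ
      (-((1 / 2 : ℝ) * (Sφ t * Fφ t).trace
          - (1 / 2 : ℝ) * (fφ t ⬝ᵥ ((E * (P t)⁻¹ * Eᵀ) *ᵥ fφ t))
          + fφ t ⬝ᵥ δ t + Cc t)) (Set.Icc 0 T) t)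
    (hcφT : cφ T = 0)
    (V : ℝ → ((Fin d ⊕ (Fin d ⊕ Fin d)) → ℝ) → ℝ)
    (hV : V = fun t φ => (1 / 2 : ℝ) * (φ ⬝ᵥ (Fφ t *ᵥ φ)) + φ ⬝ᵥ fφ t + cφ t)
    (Ham : ℝ → ((Fin d ⊕ (Fin d ⊕ Fin d)) → ℝ) → (Fin d → ℝ) → ℝ)
    (hHam : Ham = fun t φ ρ =>
      (D t *ᵥ φ + δ t + E *ᵥ ρ) ⬝ᵥ (Fφ t *ᵥ φ + fφ t)
        + φ ⬝ᵥ (Qφ t *ᵥ φ) + ℓ t ⬝ᵥ φ + Cc t + (1 / 2 : ℝ) * (ρ ⬝ᵥ (P t *ᵥ ρ)))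
    (ρstar : ℝ → ((Fin d ⊕ (Fin d ⊕ Fin d)) → ℝ) → Fin d → ℝ)
    (hρstar : ρstar = fun t φ => -((P t)⁻¹ *ᵥ (Eᵀ *ᵥ (Fφ t *ᵥ φ + fφ t)))) :
    ∀ t ∈ Set.Icc (0 : ℝ) T, ∀ φ : (Fin d ⊕ (Fin d ⊕ Fin d)) → ℝ,
      HasDerivWithinAt (fun s => V s φ)
        (-((1 / 2 : ℝ) * (Sφ t * Fφ t).trace + Ham t φ (ρstar t φ))) (Set.Icc 0 T) t ∧
      (∀ ρ : Fin d → ℝ, Ham t φ (ρstar t φ) ≤ Ham t φ ρ) ∧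
      (∀ ρ : Fin d → ℝ, Ham t φ ρ = Ham t φ (ρstar t φ) → ρ = ρstar t φ) := by
  intro t ht φ
  have hPpdt := hPpd t ht
  have hFsym : (Fφ t)ᵀ = Fφ t := hFφsymm t ht
  have hPsym : (P t)ᵀ = P t := by
    have h := hPpdt.isHermitian
    rwa [Matrix.IsHermitian, Matrix.conjTranspose_eq_transpose_of_trivial] at h
  have hPisym : ((P t)⁻¹)ᵀ = (P t)⁻¹ := by
    rw [Matrix.transpose_nonsing_inv, hPsym]
  have hPP : P t * (P t)⁻¹ = 1 := Matrix.mul_nonsing_inv _ hPpdt.det_pos.ne'.isUnit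
  have hF' := hFφ t ht
  have hf' := hfφ t ht
  have hc' := hcφ t ht
  set M := E * (P t)⁻¹ * Eᵀ with hMdef
  have hMsym : Mᵀ = M := by
    rw [hMdef]
    simp [Matrix.transpose_mul, Matrix.mul_assoc, hPisym]
  set v := Fφ t *ᵥ φ + fφ t with hvdef
  set g := Eᵀ *ᵥ v with hgdef
  set ρs := -((P t)⁻¹ *ᵥ g) with hρsdef
  have hρs_eq : ρstar t φ = ρs := by
    rw [hρstar]
  have hPρs : P t *ᵥ ρs = -g := by
    rw [hρsdef, Matrix.mulVec_neg, Matrix.mulVec_mulVec, hPP, Matrix.one_mulVec]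
  have hsh : ∀ ρ : Fin d → ℝ, (E *ᵥ ρ) ⬝ᵥ v = ρ ⬝ᵥ g := fun ρ => by
    rw [dotProduct_comm, dot_shift, ← hgdef, dotProduct_comm]
  have hH : ∀ ρ : Fin d → ℝ, Ham t φ ρ
      = ((D t *ᵥ φ) ⬝ᵥ v + δ t ⬝ᵥ v + φ ⬝ᵥ (Qφ t *ᵥ φ) + ℓ t ⬝ᵥ φ + Cc t)
        + ρ ⬝ᵥ g + (1 / 2 : ℝ) * (ρ ⬝ᵥ (P t *ᵥ ρ)) := by
    intro ρ
    rw [hHam]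
    simp only [← hvdef, add_dotProduct]
    rw [hsh ρ]
    ring
  have hρsPρs : ρs ⬝ᵥ (P t *ᵥ ρs) = -(ρs ⬝ᵥ g) := by
    rw [hPρs, dotProduct_neg]
  have hquad : ∀ ρ : Fin d → ℝ, (ρ - ρs) ⬝ᵥ (P t *ᵥ (ρ - ρs))
      = ρ ⬝ᵥ (P t *ᵥ ρ) + 2 * (ρ ⬝ᵥ g) - ρs ⬝ᵥ g := by
    intro ρ
    have e3 : ρs ⬝ᵥ (P t *ᵥ ρ) = ρ ⬝ᵥ (P t *ᵥ ρs) := dot_symm2 _ hPsym _ _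
    rw [Matrix.mulVec_sub, sub_dotProduct, dotProduct_sub,
      dotProduct_sub, e3, hPρs, dotProduct_neg, dotProduct_neg]
    ring
  have hdiff : ∀ ρ : Fin d → ℝ, Ham t φ ρ
      = Ham t φ ρs + (1 / 2 : ℝ) * ((ρ - ρs) ⬝ᵥ (P t *ᵥ (ρ - ρs))) := by
    intro ρ
    rw [hH ρ, hH ρs, hquad ρ, hρsPρs]
    ring
  have hPnn : ∀ w : Fin d → ℝ, 0 ≤ w ⬝ᵥ (P t *ᵥ w) := fun w => by
    have h := hPpdt.posSemidef.dotProduct_mulVec_nonneg w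
    simpa using h
  refine ⟨?_, ?_, ?_⟩
  · -- derivative statement
    have h1 := hasDerivWithinAt_dotmul hF' φ φ
    have h2 := hasDerivWithinAt_dotvec hf' φ
    have hD := ((h1.const_mul (1 / 2 : ℝ)).add h2).add hc'
    have hgMv : v ⬝ᵥ (M *ᵥ v) = g ⬝ᵥ ((P t)⁻¹ *ᵥ g) := by
      rw [hMdef, ← Matrix.mulVec_mulVec, ← Matrix.mulVec_mulVec, dot_shift, ← hgdef]
    have hρsg : ρs ⬝ᵥ g = -(v ⬝ᵥ (M *ᵥ v)) := by
      rw [hρsdef, neg_dotProduct, hgMv, dotProduct_comm]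
    have hHamstar : Ham t φ (ρstar t φ)
        = (D t *ᵥ φ) ⬝ᵥ v + δ t ⬝ᵥ v + φ ⬝ᵥ (Qφ t *ᵥ φ) + ℓ t ⬝ᵥ φ + Cc t
          - (1 / 2 : ℝ) * (v ⬝ᵥ (M *ᵥ v)) := by
      rw [hρs_eq, hH ρs, hρsPρs, hρsg]
      ring
    -- scalar identity between the computed derivative and the HJB value
    have t1 : φ ⬝ᵥ ((Fφ t * M * Fφ t) *ᵥ φ) = (Fφ t *ᵥ φ) ⬝ᵥ (M *ᵥ (Fφ t *ᵥ φ)) := by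
      rw [← Matrix.mulVec_mulVec, ← Matrix.mulVec_mulVec, dot_shift, hFsym]
    have t2 : φ ⬝ᵥ ((Fφ t * D t) *ᵥ φ) = (D t *ᵥ φ) ⬝ᵥ (Fφ t *ᵥ φ) := by
      rw [← Matrix.mulVec_mulVec, dot_shift, hFsym, dotProduct_comm]
    have t3 : φ ⬝ᵥ (((D t)ᵀ * Fφ t) *ᵥ φ) = (D t *ᵥ φ) ⬝ᵥ (Fφ t *ᵥ φ) := by
      rw [← Matrix.mulVec_mulVec, dot_shift, Matrix.transpose_transpose]
    have t4 : φ ⬝ᵥ ((Fφ t * M) *ᵥ fφ t) = (Fφ t *ᵥ φ) ⬝ᵥ (M *ᵥ fφ t) := by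
      rw [← Matrix.mulVec_mulVec, dot_shift, hFsym]
    have t5 : φ ⬝ᵥ (Fφ t *ᵥ δ t) = (Fφ t *ᵥ φ) ⬝ᵥ δ t := by
      rw [dot_shift, hFsym]
    have t6 : φ ⬝ᵥ ((D t)ᵀ *ᵥ fφ t) = (D t *ᵥ φ) ⬝ᵥ fφ t := by
      rw [dot_shift, Matrix.transpose_transpose]
    have t7 : φ ⬝ᵥ ℓ t = ℓ t ⬝ᵥ φ := dotProduct_comm _ _
    have r2 : v ⬝ᵥ (M *ᵥ v) = (Fφ t *ᵥ φ) ⬝ᵥ (M *ᵥ (Fφ t *ᵥ φ))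
        + 2 * ((Fφ t *ᵥ φ) ⬝ᵥ (M *ᵥ fφ t)) + fφ t ⬝ᵥ (M *ᵥ fφ t) := by
      have e : fφ t ⬝ᵥ (M *ᵥ (Fφ t *ᵥ φ)) = (Fφ t *ᵥ φ) ⬝ᵥ (M *ᵥ fφ t) :=
        dot_symm2 _ hMsym _ _
      rw [hvdef, Matrix.mulVec_add, dotProduct_add, add_dotProduct,
        add_dotProduct, e]
      ring
    have r3 : (D t *ᵥ φ) ⬝ᵥ v = (D t *ᵥ φ) ⬝ᵥ (Fφ t *ᵥ φ) + (D t *ᵥ φ) ⬝ᵥ fφ t := by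
      rw [hvdef, dotProduct_add]
    have r4 : δ t ⬝ᵥ v = (Fφ t *ᵥ φ) ⬝ᵥ δ t + fφ t ⬝ᵥ δ t := by
      rw [hvdef, dotProduct_add, dotProduct_comm, dotProduct_comm (δ t)]
    have heq : -((1 / 2 : ℝ) * (Sφ t * Fφ t).trace + Ham t φ (ρstar t φ))
        = (1 / 2 : ℝ) * (φ ⬝ᵥ ((Fφ t * M * Fφ t
            - (Fφ t * D t + (D t)ᵀ * Fφ t + (2 : ℝ) • Qφ t)) *ᵥ φ))
          + φ ⬝ᵥ ((Fφ t * M) *ᵥ fφ t - (Fφ t *ᵥ δ t + (D t)ᵀ *ᵥ fφ t + ℓ t))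
          + -((1 / 2 : ℝ) * (Sφ t * Fφ t).trace
            - (1 / 2 : ℝ) * (fφ t ⬝ᵥ (M *ᵥ fφ t)) + fφ t ⬝ᵥ δ t + Cc t) := by
      rw [hHamstar, r2, r3, r4]
      simp only [Matrix.sub_mulVec, Matrix.add_mulVec, Matrix.smul_mulVec,
        dotProduct_sub, dotProduct_add, dotProduct_smul, smul_eq_mul]
      rw [t1, t2, t3, t4, t5, t6, t7]
      ring
    rw [hV]
    simp only []
    rw [heq]
    exact hD
  · intro ρ
    rw [hρs_eq, hdiff ρ]
    have h0 := hPnn (ρ - ρs)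
    linarith
  · intro ρ hρeq
    rw [hρs_eq] at hρeq ⊢
    rw [hdiff ρ] at hρeq
    have h0 : (ρ - ρs) ⬝ᵥ (P t *ᵥ (ρ - ρs)) = 0 := by linarith
    by_contra hne
    have hx : ρ - ρs ≠ 0 := sub_ne_zero.mpr hne
    have hpos := hPpdt.dotProduct_mulVec_pos hx
    simp only [star_trivial] at hpos
    linarith
end
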